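/- arXiv:2008.13224 — 4 statements merged into one kernel-verified Lean document; each statement's English description precedes it below -/
import Mathlib

section
/- Fix b ≥ 1 and g = 4b². Let G be a gadget of type I or of type II (basic or extended), with designated vertices p, q. Then: (1) G contains a (2,b)-alternating-path R_0 with s_1(R_0) = t_1(R_0) = p and t_2(R_0) = q; (2) from every vertex of G there is a directed path in G ending in {p,q}. -/
/- Common definitions: digraphs as irreflexive-in-intent relations `V → V → Prop`,
   directed paths as nonempty duplicate-free lists of vertices,
   subdivisions, gadgets, alternating paths and chains, following
   "Subdivisions in digraphs of large out-degree or large dichromatic number". -/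

namespace Paper

variable {V : Type*}

/-- `p` is a directed path in the digraph `D`: a nonempty list of pairwise distinct
vertices in which consecutive vertices are joined by an arc of `D`.
Its length (number of arcs) is `p.length - 1`. -/
def IsDipathList (D : V → V → Prop) (p : List V) : Prop :=
  p ≠ [] ∧ p.Nodup ∧ p.Chain' D

/-- The out-degree of a vertex. -/
noncomputable def outDeg (D : V → V → Prop) (v : V) : ℕ :=
  Set.ncard {w | D v w}

/-- The digraph `D` contains a subdivision of the digraph `F`: there is an injective
embedding `φ` of the branch vertices and, for every arc `(x,y)` of `F`, a directed path
in `D` from `φ x` to `φ y` of length at least one, such that the internal vertices of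
these paths avoid the branch vertices and the paths of distinct arcs are internally
vertex-disjoint. -/
def ContainsSubdivisionOf {W : Type*} (D : V → V → Prop) (F : W → W → Prop) : Prop :=
  ∃ (φ : W → V) (P : W → W → List V),
    Function.Injective φ ∧
    (∀ ⦃x y⦄, F x y → IsDipathList D (P x y) ∧ (P x y).head? = some (φ x) ∧
      (P x y).getLast? = some (φ y) ∧ 2 ≤ (P x y).length ∧
      ∀ z ∈ (P x y).tail.dropLast, ∀ w, φ w ≠ z) ∧
    (∀ ⦃x y x' y'⦄, F x y → F x' y' → (x, y) ≠ (x', y') →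
      ∀ z ∈ (P x y).tail.dropLast, z ∉ P x' y')

/-- As `ContainsSubdivisionOf`, but moreover the subdivision spans exactly
the vertex set `S`. -/
def SpansSubdivisionOf {W : Type*} (D : V → V → Prop) (S : Set V) (F : W → W → Prop) : Prop :=
  ∃ (φ : W → V) (P : W → W → List V),
    Function.Injective φ ∧
    (∀ ⦃x y⦄, F x y → IsDipathList D (P x y) ∧ (P x y).head? = some (φ x) ∧
      (P x y).getLast? = some (φ y) ∧ 2 ≤ (P x y).length ∧
      ∀ z ∈ (P x y).tail.dropLast, ∀ w, φ w ≠ z) ∧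
    (∀ ⦃x y x' y'⦄, F x y → F x' y' → (x, y) ≠ (x', y') →
      ∀ z ∈ (P x y).tail.dropLast, z ∉ P x' y') ∧
    S = Set.range φ ∪ {z | ∃ x y, F x y ∧ z ∈ P x y}

/-- The biorientation of the triangle minus one arc: vertices `0,1,2` and arcs
`(0,1),(1,0),(1,2),(2,1),(0,2)`. -/
def K3e : Fin 3 → Fin 3 → Prop := fun x y =>
  (x, y) = (0, 1) ∨ (x, y) = (1, 0) ∨ (x, y) = (1, 2) ∨ (x, y) = (2, 1) ∨ (x, y) = (0, 2)

/-- The biorientation of the complete graph on four vertices. -/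
def K4bi : Fin 4 → Fin 4 → Prop := fun x y => x ≠ y

/-- The biorientation of the star with four edges (center `0`). -/
def S4bi : Fin 5 → Fin 5 → Prop := fun x y => x ≠ y ∧ (x = 0 ∨ y = 0)

/-- The orientation of the cycle of length `ℓ` (vertex set `ZMod ℓ`) determined by
`σ`: the edge `{x, x+1}` is oriented from `x` to `x+1` if `σ x = true`, and from
`x+1` to `x` otherwise. -/
def CycleOrientation (ℓ : ℕ) (σ : ZMod ℓ → Bool) : ZMod ℓ → ZMod ℓ → Prop :=
  fun x y => (σ x = true ∧ y = x + 1) ∨ (σ y = false ∧ x = y + 1)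

/-- The oriented cycle `C_{a,b}` on `2ab` vertices: going around the cycle
`ZMod (2ab)`, the arcs of the `j`-th block of `b` consecutive edges are oriented
forwards for even `j` and backwards for odd `j`; its sources are `s_j = 2bj`
and its sinks are `t_j = 2bj + b`, joined by `2a` internally disjoint directed
paths of length `b` each. -/
def Cab (a b : ℕ) : ZMod (2 * a * b) → ZMod (2 * a * b) → Prop := fun x y =>
  ∃ i : ℕ, i < 2 * a * b ∧
    (((i / b) % 2 = 0 ∧ x = (i : ZMod (2 * a * b)) ∧ y = ((i + 1 : ℕ) : ZMod (2 * a * b))) ∨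
     ((i / b) % 2 = 1 ∧ x = ((i + 1 : ℕ) : ZMod (2 * a * b)) ∧ y = (i : ZMod (2 * a * b))))

/-- The directed girth of `D` is at least `g`: every directed cycle
(a nonempty duplicate-free list `v :: p` with consecutive arcs and an arc from the
last vertex back to `v`) has length at least `g`. -/
def DirGirthGE (D : V → V → Prop) (g : ℕ) : Prop :=
  ∀ (v : V) (p : List V), (v :: p).Nodup → List.Chain D v (p ++ [v]) → g ≤ p.length + 1

/-- `D` is strongly connected. -/
def StronglyConnected (D : V → V → Prop) : Prop :=
  ∀ u v : V, Relation.ReflTransGen D u v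

/-- `D` is strongly `k`-arc-connected: after deleting any set of at most `k-1` arcs,
the digraph remains strongly connected. -/
def StronglyArcConnected (D : V → V → Prop) (k : ℕ) : Prop :=
  ∀ E : Finset (V × V), E.card < k →
    StronglyConnected (fun u v => D u v ∧ (u, v) ∉ E)

/-- `x` and `y` are consecutive (in this order) in the list `l`. -/
def adjIn (l : List V) (x y : V) : Prop := ∃ l₁ l₂, l = l₁ ++ x :: y :: l₂

/-- A type-I gadget in `D`: a directed cycle `p, q, rest…` of length at least `g`
through the arc `(p,q)`. -/
structure TypeIGadget (D : V → V → Prop) (g : ℕ) where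
  p : V
  q : V
  rest : List V
  nodup : (p :: q :: rest).Nodup
  chain : List.Chain D p (q :: (rest ++ [p]))
  glen : g ≤ rest.length + 2

def TypeIGadget.verts {D : V → V → Prop} {g : ℕ} (G : TypeIGadget D g) : Set V :=
  {x | x ∈ G.p :: G.q :: G.rest}

def TypeIGadget.arcs {D : V → V → Prop} {g : ℕ} (G : TypeIGadget D g) : V → V → Prop :=
  adjIn (G.p :: G.q :: (G.rest ++ [G.p]))

/-- A basic type-II gadget in `D` (with girth parameter `b`): vertices `p, q, r` and a
directed path `P₁` from `r` to `p` of length at least `2b² + b - 2` avoiding `q`,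
all of whose vertices send an arc to `q`. -/
structure BasicIIGadget (D : V → V → Prop) (b : ℕ) where
  p : V
  q : V
  r : V
  P₁ : List V
  path₁ : IsDipathList D P₁
  first₁ : P₁.head? = some r
  last₁ : P₁.getLast? = some p
  len₁ : 2 * b ^ 2 + b - 1 ≤ P₁.length
  hq : q ∉ P₁
  toq : ∀ x ∈ P₁, D x q

def BasicIIGadget.verts {D : V → V → Prop} {b : ℕ} (G : BasicIIGadget D b) : Set V :=
  insert G.q {x | x ∈ G.P₁}

def BasicIIGadget.arcs {D : V → V → Prop} {b : ℕ} (G : BasicIIGadget D b) :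
    V → V → Prop :=
  fun x y => adjIn G.P₁ x y ∨ (x ∈ G.P₁ ∧ y = G.q)

/-- An extended type-II gadget: a basic type-II gadget together with a directed path
`P₂` of length at least `b` ending at `r`, meeting `P₁` only in `r` and avoiding `q`,
such that either the first vertex of `P₂` sends an arc to the second vertex of `P₁`,
or some vertex of `P₁` other than `r` sends an arc to the first vertex of `P₂`. -/
structure ExtIIGadget (D : V → V → Prop) (b : ℕ) where
  p : V
  q : V
  r : V
  P₁ : List V
  path₁ : IsDipathList D P₁
  first₁ : P₁.head? = some r
  last₁ : P₁.getLast? = some p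
  len₁ : 2 * b ^ 2 + b - 1 ≤ P₁.length
  hq : q ∉ P₁
  toq : ∀ x ∈ P₁, D x q
  P₂ : List V
  path₂ : IsDipathList D P₂
  last₂ : P₂.getLast? = some r
  len₂ : b + 1 ≤ P₂.length
  inter : ∀ x ∈ P₁, x ∈ P₂ → x = r
  hq₂ : q ∉ P₂
  extra : (∃ z y, P₂.head? = some z ∧ P₁[1]? = some y ∧ D z y) ∨
          (∃ w z, w ∈ P₁ ∧ w ≠ r ∧ P₂.head? = some z ∧ D w z)

def ExtIIGadget.verts {D : V → V → Prop} {b : ℕ} (G : ExtIIGadget D b) : Set V :=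
  insert G.q ({x | x ∈ G.P₁} ∪ {x | x ∈ G.P₂})

def ExtIIGadget.arcs {D : V → V → Prop} {b : ℕ} (G : ExtIIGadget D b) : V → V → Prop :=
  fun x y => adjIn G.P₁ x y ∨ (x ∈ G.P₁ ∧ y = G.q) ∨ adjIn G.P₂ x y ∨
    (D x y ∧ ((G.P₂.head? = some x ∧ G.P₁[1]? = some y) ∨
              (x ∈ G.P₁ ∧ x ≠ G.r ∧ G.P₂.head? = some y)))

/-- A type-III gadget: vertices `p, q, r`, the arc `(p,q)`, and two internally
vertex-disjoint directed paths `P₁ : p → r` and `P₂ : q → r`, each of length at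
least `2b - 1`. -/
structure TypeIIIGadget (D : V → V → Prop) (b : ℕ) where
  p : V
  q : V
  r : V
  arc : D p q
  P₁ : List V
  P₂ : List V
  path₁ : IsDipathList D P₁
  path₂ : IsDipathList D P₂
  first₁ : P₁.head? = some p
  first₂ : P₂.head? = some q
  last₁ : P₁.getLast? = some r
  last₂ : P₂.getLast? = some r
  len₁ : 2 * b ≤ P₁.length
  len₂ : 2 * b ≤ P₂.length
  inter : ∀ x ∈ P₁, x ∈ P₂ → x = r

def TypeIIIGadget.verts {D : V → V → Prop} {b : ℕ} (G : TypeIIIGadget D b) : Set V :=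
  {x | x ∈ G.P₁} ∪ {x | x ∈ G.P₂}

def TypeIIIGadget.arcs {D : V → V → Prop} {b : ℕ} (G : TypeIIIGadget D b) :
    V → V → Prop :=
  fun x y => (x = G.p ∧ y = G.q) ∨ adjIn G.P₁ x y ∨ adjIn G.P₂ x y

/-- A trivial gadget: just the arc `(p,q)`. -/
structure TrivGadget (D : V → V → Prop) where
  p : V
  q : V
  arc : D p q

def TrivGadget.verts {D : V → V → Prop} (G : TrivGadget D) : Set V := {G.p, G.q}

def TrivGadget.arcs {D : V → V → Prop} (G : TrivGadget D) : V → V → Prop :=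
  fun x y => x = G.p ∧ y = G.q

/-- An `(a,b)`-alternating path in `D` (with 0-based indexing): vertices
`s 0, …, s (a-1)`, `t 0, …, t (a-1)` and pairwise internally disjoint directed paths
`Q i : s i → t i` and `Q' i : s (i+1) → t i`, forming an oriented path; every `Q' i`
and every `Q i` with `0 < i < a - 1` has length at least `b` (`Q 0` and `Q (a-1)`
may even be single vertices). -/
structure AltPath (D : V → V → Prop) (a b : ℕ) where
  s : Fin a → V
  t : Fin a → V
  Q : Fin a → List V
  Q' : Fin (a - 1) → List V
  path_Q : ∀ i, IsDipathList D (Q i)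
  first_Q : ∀ i, (Q i).head? = some (s i)
  last_Q : ∀ i, (Q i).getLast? = some (t i)
  path_Q' : ∀ i, IsDipathList D (Q' i)
  first_Q' : ∀ i : Fin (a - 1),
    (Q' i).head? = some (s ⟨i.val + 1, by have := i.isLt; omega⟩)
  last_Q' : ∀ i : Fin (a - 1),
    (Q' i).getLast? = some (t ⟨i.val, by have := i.isLt; omega⟩)
  len_Q : ∀ i : Fin a, 0 < i.val → i.val < a - 1 → b + 1 ≤ (Q i).length
  len_Q' : ∀ i, b + 1 ≤ (Q' i).length
  disj_QQ : ∀ i j : Fin a, i ≠ j → ∀ x ∈ Q i, x ∉ Q j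
  disj_Q'Q' : ∀ i j : Fin (a - 1), i ≠ j → ∀ x ∈ Q' i, x ∉ Q' j
  disj_QQ' : ∀ (i : Fin a) (j : Fin (a - 1)), ∀ x ∈ Q i, x ∈ Q' j →
    (j.val = i.val ∧ x = t i) ∨ (i.val = j.val + 1 ∧ x = s i)

def AltPath.verts {D : V → V → Prop} {a b : ℕ} (R : AltPath D a b) : Set V :=
  {x | (∃ i, x ∈ R.Q i) ∨ (∃ i, x ∈ R.Q' i)}

/-- A strong alternating path: additionally `Q 0` and `Q (a-1)` (hence all `Q i`)
have length at least `b`. -/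
def AltPath.Strong {D : V → V → Prop} {a b : ℕ} (R : AltPath D a b) : Prop :=
  ∀ i, b + 1 ≤ (R.Q i).length

def AltPath.arcs {D : V → V → Prop} {a b : ℕ} (R : AltPath D a b) : V → V → Prop :=
  fun x y => (∃ i, adjIn (R.Q i) x y) ∨ (∃ i, adjIn (R.Q' i) x y)

/-- A gadget allowed in a chain: type I (with `g = 4b²`), basic type II, or type III. -/
inductive ChainGadget (D : V → V → Prop) (b : ℕ) where
  | I : TypeIGadget D (4 * b ^ 2) → ChainGadget D b
  | II : BasicIIGadget D b → ChainGadget D b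
  | III : TypeIIIGadget D b → ChainGadget D b

def ChainGadget.pp {D : V → V → Prop} {b : ℕ} : ChainGadget D b → V
  | .I G => G.p
  | .II G => G.p
  | .III G => G.p

def ChainGadget.qq {D : V → V → Prop} {b : ℕ} : ChainGadget D b → V
  | .I G => G.q
  | .II G => G.q
  | .III G => G.q

def ChainGadget.verts {D : V → V → Prop} {b : ℕ} : ChainGadget D b → Set V
  | .I G => G.verts
  | .II G => G.verts
  | .III G => G.verts

def ChainGadget.arcs {D : V → V → Prop} {b : ℕ} : ChainGadget D b → V → V → Prop
  | .I G => G.arcs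
  | .II G => G.arcs
  | .III G => G.arcs

/-- A chain in `D`: a directed path (spine) `v 0, …, v m`, a set `A2` of spine arcs,
and a gadget for every arc in `A2` (arcs outside `A2` form `A1` and carry trivial
gadgets), such that each gadget has the endpoints of its arc as designated vertices,
meets the spine only in these two vertices, and two distinct gadgets meet only in
spine vertices. -/
structure GChain (D : V → V → Prop) (b m : ℕ) where
  v : Fin (m + 1) → V
  inj : Function.Injective v
  spine : ∀ i : Fin m, D (v i.castSucc) (v i.succ)
  A2 : Finset (Fin m)
  gad : (i : Fin m) → i ∈ A2 → ChainGadget D b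
  hp : ∀ (i : Fin m) (hi : i ∈ A2), (gad i hi).pp = v i.castSucc
  hq : ∀ (i : Fin m) (hi : i ∈ A2), (gad i hi).qq = v i.succ
  hspine : ∀ (i : Fin m) (hi : i ∈ A2) (j : Fin (m + 1)),
    v j ∈ (gad i hi).verts → j = i.castSucc ∨ j = i.succ
  hdisj : ∀ (i : Fin m) (hi : i ∈ A2) (j : Fin m) (hj : j ∈ A2), i ≠ j →
    ∀ x, x ∈ (gad i hi).verts → x ∈ (gad j hj).verts → ∃ k, x = v k

def GChain.verts {D : V → V → Prop} {b m : ℕ} (C : GChain D b m) : Set V :=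
  Set.range C.v ∪ {x | ∃ (i : Fin m) (hi : i ∈ C.A2), x ∈ (C.gad i hi).verts}

def GChain.arcs {D : V → V → Prop} {b m : ℕ} (C : GChain D b m) : V → V → Prop :=
  fun x y => (∃ i : Fin m, x = C.v i.castSucc ∧ y = C.v i.succ) ∨
    (∃ (i : Fin m) (hi : i ∈ C.A2), (C.gad i hi).arcs x y)

/-- The vertex set of the gadget `G_e` sitting on the `i`-th spine arc
(the trivial gadget for arcs of `A1`). -/
def GChain.gadVerts {D : V → V → Prop} {b m : ℕ} (C : GChain D b m) (i : Fin m) :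
    Set V :=
  if h : i ∈ C.A2 then (C.gad i h).verts else {C.v i.castSucc, C.v i.succ}

/-- An arbitrary gadget: trivial, type I (with `g = 4b²`), basic or extended type II,
or type III. -/
inductive GadgetAny (D : V → V → Prop) (b : ℕ) where
  | triv : TrivGadget D → GadgetAny D b
  | I : TypeIGadget D (4 * b ^ 2) → GadgetAny D b
  | II : BasicIIGadget D b → GadgetAny D b
  | IIext : ExtIIGadget D b → GadgetAny D b
  | III : TypeIIIGadget D b → GadgetAny D b

def GadgetAny.pp {D : V → V → Prop} {b : ℕ} : GadgetAny D b → V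
  | .triv G => G.p
  | .I G => G.p
  | .II G => G.p
  | .IIext G => G.p
  | .III G => G.p

def GadgetAny.qq {D : V → V → Prop} {b : ℕ} : GadgetAny D b → V
  | .triv G => G.q
  | .I G => G.q
  | .II G => G.q
  | .IIext G => G.q
  | .III G => G.q

def GadgetAny.verts {D : V → V → Prop} {b : ℕ} : GadgetAny D b → Set V
  | .triv G => G.verts
  | .I G => G.verts
  | .II G => G.verts
  | .IIext G => G.verts
  | .III G => G.verts

def GadgetAny.arcs {D : V → V → Prop} {b : ℕ} : GadgetAny D b → V → V → Prop
  | .triv G => G.arcs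
  | .I G => G.arcs
  | .II G => G.arcs
  | .IIext G => G.arcs
  | .III G => G.arcs

end Paper

/-! The alternating path `R₀` consists of `Q₁ = [p]`, a directed path `Q'₁` of length at
least `b` ending at `p`, and a path `Q₂` from the start of `Q'₁` to `q` that meets `Q'₁` only
there. In a type-I gadget, `Q'₁` is the cycle with the arc `(p,q)` removed and `Q₂ = [q]`.
In a type-II gadget, `Q'₁` is the final segment of length `b` of `P₁`, which starts at some
`s ≠ p` since `b ≥ 1`, and `Q₂` is the arc `s → q`.
Every vertex of a type-I gadget reaches `p` along the cycle; every vertex of a type-II gadget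
reaches `q` by its own arc to `q`, or, on `P₂`, by following `P₂` to `r` first. -/

namespace Paper

section

variable {V : Type*}

theorem isChain_adjIn (l : List V) : l.IsChain (adjIn l) :=
  List.isChain_iff_forall_rel_of_append_cons_cons.2 fun _ _ l₁ l₂ h => ⟨l₁, l₂, h⟩

theorem isDipathList_of_adjIn {A : V → V → Prop} {l : List V}
    (hA : ∀ x y, adjIn l x y → A x y) (hne : l ≠ []) (hnd : l.Nodup) : IsDipathList A l :=
  ⟨hne, hnd, (isChain_adjIn l).imp hA⟩

theorem isDipathList_singleton (A : V → V → Prop) (x : V) : IsDipathList A [x] :=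
  ⟨List.cons_ne_nil x [], List.nodup_singleton x, List.isChain_singleton x⟩

theorem isDipathList_pair {A : V → V → Prop} {x y : V} (h : A x y) (hne : x ≠ y) :
    IsDipathList A [x, y] :=
  ⟨List.cons_ne_nil x [y], by simp [hne], List.isChain_pair.2 h⟩

theorem IsDipathList.suffix {A : V → V → Prop} {l l' : List V} (hl : IsDipathList A l)
    (h : l' <:+ l) (hne : l' ≠ []) : IsDipathList A l' :=
  ⟨hne, hl.2.1.sublist h.sublist, hl.2.2.suffix h⟩

theorem IsDipathList.append_singleton {A : V → V → Prop} {l : List V} {r y : V}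
    (hl : IsDipathList A l) (hr : l.getLast? = some r) (hry : A r y) (hy : y ∉ l) :
    IsDipathList A (l ++ [y]) := by
  refine ⟨by simp, List.nodup_append.2 ⟨hl.2.1, List.nodup_singleton y, ?_⟩,
    List.isChain_append.2 ⟨hl.2.2, List.isChain_singleton y, ?_⟩⟩
  · simp only [List.mem_singleton]
    rintro a ha _ rfl rfl
    exact hy ha
  · intro a ha c hc
    simp_all

theorem getLast?_eq_of_suffix {l l' : List V} (h : l' <:+ l) (hne : l' ≠ []) :
    l'.getLast? = l.getLast? := by
  obtain ⟨t, rfl⟩ := h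
  exact (List.getLast?_append_of_ne_nil t hne).symm

theorem head_ne_of_getLast?_eq {l : List V} {a c : V} (hnd : (a :: l).Nodup) (hl : l ≠ [])
    (hc : (a :: l).getLast? = some c) : a ≠ c := by
  obtain ⟨y, l', rfl⟩ := List.exists_cons_of_ne_nil hl
  rw [List.getLast?_cons_cons] at hc
  rintro rfl
  exact (List.nodup_cons.1 hnd).1 (List.mem_of_getLast? hc)

theorem IsDipathList.exists_suffix_of_mem {A : V → V → Prop} {l : List V} {x : V}
    (hl : IsDipathList A l) (hx : x ∈ l) :
    ∃ l', l' <:+ l ∧ IsDipathList A l' ∧ l'.head? = some x ∧ l'.getLast? = l.getLast? := by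
  obtain ⟨s, t, rfl⟩ := List.append_of_mem hx
  have hsuf := List.suffix_append s (x :: t)
  exact ⟨x :: t, hsuf, hl.suffix hsuf (List.cons_ne_nil x t), rfl,
    getLast?_eq_of_suffix hsuf (List.cons_ne_nil x t)⟩

theorem exists_altPath_two {A : V → V → Prop} {b : ℕ} {S T : List V} {p q s : V}
    (hS : IsDipathList A S) (hSh : S.head? = some s) (hSl : S.getLast? = some p)
    (hSlen : b + 1 ≤ S.length)
    (hT : IsDipathList A T) (hTh : T.head? = some s) (hTl : T.getLast? = some q)
    (hpT : p ∉ T) (hST : ∀ x ∈ T, x ∈ S → x = s) :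
    ∃ R : AltPath A 2 b, R.s 0 = p ∧ R.t 0 = p ∧ R.t 1 = q := by
  refine ⟨⟨![p, s], ![p, q], ![[p], T], ![S], ?_, ?_, ?_, ?_, ?_, ?_, ?_, ?_, ?_, ?_, ?_⟩,
    rfl, rfl, rfl⟩
  all_goals simp [Fin.forall_fin_two, Fin.forall_fin_one, isDipathList_singleton,
    Nat.lt_of_succ_le hSlen, hS, hSh, hSl, hT, hTh, hTl, hpT]
  · exact fun x hx hxp => hpT (hxp ▸ hx)
  · exact hST

theorem exists_altPath_two_of_forall_arc_to {A : V → V → Prop} {b : ℕ} {P : List V} {p q : V}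
    (hb : 1 ≤ b) (hP : IsDipathList A P) (hPl : P.getLast? = some p) (hlen : b + 1 ≤ P.length)
    (hq : q ∉ P) (hPq : ∀ x ∈ P, A x q) :
    ∃ R : AltPath A 2 b, R.s 0 = p ∧ R.t 0 = p ∧ R.t 1 = q := by
  have hsuf : P.drop (P.length - (b + 1)) <:+ P := List.drop_suffix _ _
  have hlen' : (P.drop (P.length - (b + 1))).length = b + 1 := by
    rw [List.length_drop]; omega
  obtain ⟨s, S, hsS⟩ := List.exists_cons_of_length_pos (by rw [hlen']; omega)
  rw [hsS, List.length_cons] at hlen'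
  rw [hsS] at hsuf
  have hS := hP.suffix hsuf (List.cons_ne_nil s S)
  have hSl : (s :: S).getLast? = some p := hPl ▸ getLast?_eq_of_suffix hsuf (List.cons_ne_nil s S)
  have hsP : s ∈ P := hsuf.subset List.mem_cons_self
  have hps : p ≠ s :=
    (head_ne_of_getLast?_eq hS.2.1 (List.ne_nil_of_length_pos (by omega)) hSl).symm
  have hpq : p ≠ q := fun h => hq (h ▸ List.mem_of_getLast? hPl)
  have hqs : q ≠ s := fun h => hq (h ▸ hsP)
  refine exists_altPath_two (T := [s, q]) hS rfl hSl (by simp [hlen'])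
    (isDipathList_pair (hPq s hsP) hqs.symm) rfl rfl (by simp [hps, hpq]) ?_
  intro x hx hxS
  rcases List.mem_pair.1 hx with rfl | rfl
  · rfl
  · exact absurd (hsuf.subset hxS) hq

namespace TypeIGadget

variable {D : V → V → Prop} {g : ℕ} (G : TypeIGadget D g)

theorem isDipathList_cons_q_append_p : IsDipathList G.arcs (G.q :: (G.rest ++ [G.p])) :=
  ⟨List.cons_ne_nil _ _, (List.perm_append_singleton G.p (G.q :: G.rest)).nodup_iff.2 G.nodup,
    (isChain_adjIn (G.p :: G.q :: (G.rest ++ [G.p]))).tail⟩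

theorem getLast?_cons_q_append_p : (G.q :: (G.rest ++ [G.p])).getLast? = some G.p := by
  rw [← List.cons_append, List.getLast?_concat]

theorem exists_altPath {b : ℕ} (hbg : b + 1 ≤ g) :
    ∃ R : AltPath G.arcs 2 b, R.s 0 = G.p ∧ R.t 0 = G.p ∧ R.t 1 = G.q := by
  have hpq : G.p ≠ G.q := fun h => (List.nodup_cons.1 G.nodup).1 (h ▸ List.mem_cons_self)
  refine exists_altPath_two (T := [G.q]) G.isDipathList_cons_q_append_p rfl
    G.getLast?_cons_q_append_p ?_ (isDipathList_singleton _ _) rfl rfl (by simp [hpq])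
    fun x hx _ => List.mem_singleton.1 hx
  have := G.glen
  simp only [List.length_cons, List.length_append]
  omega

theorem exists_dipath_to_p {x : V} (hx : x ∈ G.verts) :
    ∃ P, IsDipathList G.arcs P ∧ P.head? = some x ∧ P.getLast? = some G.p := by
  have hx' : x ∈ G.q :: (G.rest ++ [G.p]) := by
    simp only [verts, Set.mem_ofPred_eq, List.mem_cons, List.mem_append] at hx ⊢
    tauto
  obtain ⟨P, -, hP, hPh, hPl⟩ := G.isDipathList_cons_q_append_p.exists_suffix_of_mem hx'
  exact ⟨P, hP, hPh, hPl.trans G.getLast?_cons_q_append_p⟩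

end TypeIGadget

namespace BasicIIGadget

variable {D : V → V → Prop} {b : ℕ} (G : BasicIIGadget D b)

theorem exists_altPath (hb : 1 ≤ b) :
    ∃ R : AltPath G.arcs 2 b, R.s 0 = G.p ∧ R.t 0 = G.p ∧ R.t 1 = G.q := by
  have hlen := G.len₁
  have : 1 ≤ b ^ 2 := Nat.one_le_pow _ _ hb
  exact exists_altPath_two_of_forall_arc_to hb
    (isDipathList_of_adjIn (fun _ _ => Or.inl) G.path₁.1 G.path₁.2.1) G.last₁ (by omega) G.hq
    fun x hx => Or.inr ⟨hx, rfl⟩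

theorem exists_dipath_to_q {x : V} (hx : x ∈ G.verts) :
    ∃ P, IsDipathList G.arcs P ∧ P.head? = some x ∧ P.getLast? = some G.q := by
  rcases hx with rfl | hx
  · exact ⟨[G.q], isDipathList_singleton _ _, rfl, rfl⟩
  · exact ⟨[x, G.q], isDipathList_pair (Or.inr ⟨hx, rfl⟩) (ne_of_mem_of_not_mem hx G.hq),
      rfl, rfl⟩

end BasicIIGadget

namespace ExtIIGadget

variable {D : V → V → Prop} {b : ℕ} (G : ExtIIGadget D b)

theorem exists_altPath (hb : 1 ≤ b) :
    ∃ R : AltPath G.arcs 2 b, R.s 0 = G.p ∧ R.t 0 = G.p ∧ R.t 1 = G.q := by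
  have hlen := G.len₁
  have : 1 ≤ b ^ 2 := Nat.one_le_pow _ _ hb
  exact exists_altPath_two_of_forall_arc_to hb
    (isDipathList_of_adjIn (fun _ _ => Or.inl) G.path₁.1 G.path₁.2.1) G.last₁ (by omega) G.hq
    fun x hx => Or.inr (Or.inl ⟨hx, rfl⟩)

theorem exists_dipath_to_q {x : V} (hx : x ∈ G.verts) :
    ∃ P, IsDipathList G.arcs P ∧ P.head? = some x ∧ P.getLast? = some G.q := by
  rcases hx with rfl | hx | hx
  · exact ⟨[G.q], isDipathList_singleton _ _, rfl, rfl⟩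
  · exact ⟨[x, G.q], isDipathList_pair (Or.inr (Or.inl ⟨hx, rfl⟩))
      (ne_of_mem_of_not_mem hx G.hq), rfl, rfl⟩
  · have hP₂ : IsDipathList G.arcs G.P₂ :=
      isDipathList_of_adjIn (fun _ _ h => Or.inr (Or.inr (Or.inl h))) G.path₂.1 G.path₂.2.1
    obtain ⟨P, hsuf, hP, hPh, hPl⟩ := hP₂.exists_suffix_of_mem hx
    have hrP₁ : G.r ∈ G.P₁ := List.mem_of_mem_head? G.first₁
    have hrq : G.arcs G.r G.q := Or.inr (Or.inl ⟨hrP₁, rfl⟩)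
    exact ⟨P ++ [G.q],
      hP.append_singleton (hPl.trans G.last₂) hrq fun h => G.hq₂ (hsuf.subset h),
      (List.head?_append_of_ne_nil _ hP.1).trans hPh, List.getLast?_concat⟩

end ExtIIGadget

end

theorem stmt_8_general {V : Type*} (D : V → V → Prop)
    (b : ℕ) (hb : 1 ≤ b) :
    (∀ G : TypeIGadget D (4 * b ^ 2),
      (∃ R : AltPath G.arcs 2 b, R.s 0 = G.p ∧ R.t 0 = G.p ∧ R.t 1 = G.q) ∧
      (∀ x ∈ G.verts, ∃ P : List V, IsDipathList G.arcs P ∧ P.head? = some x ∧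
        (P.getLast? = some G.p ∨ P.getLast? = some G.q))) ∧
    (∀ G : BasicIIGadget D b,
      (∃ R : AltPath G.arcs 2 b, R.s 0 = G.p ∧ R.t 0 = G.p ∧ R.t 1 = G.q) ∧
      (∀ x ∈ G.verts, ∃ P : List V, IsDipathList G.arcs P ∧ P.head? = some x ∧
        (P.getLast? = some G.p ∨ P.getLast? = some G.q))) ∧
    (∀ G : ExtIIGadget D b,
      (∃ R : AltPath G.arcs 2 b, R.s 0 = G.p ∧ R.t 0 = G.p ∧ R.t 1 = G.q) ∧
      (∀ x ∈ G.verts, ∃ P : List V, IsDipathList G.arcs P ∧ P.head? = some x ∧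
        (P.getLast? = some G.p ∨ P.getLast? = some G.q))) := by
  have hb4 : b + 1 ≤ 4 * b ^ 2 := by nlinarith
  refine ⟨fun G => ⟨G.exists_altPath hb4, fun x hx => ?_⟩,
    fun G => ⟨G.exists_altPath hb, fun x hx => ?_⟩,
    fun G => ⟨G.exists_altPath hb, fun x hx => ?_⟩⟩
  · exact (G.exists_dipath_to_p hx).imp fun _ h => ⟨h.1, h.2.1, Or.inl h.2.2⟩
  · exact (G.exists_dipath_to_q hx).imp fun _ h => ⟨h.1, h.2.1, Or.inr h.2.2⟩
  · exact (G.exists_dipath_to_q hx).imp fun _ h => ⟨h.1, h.2.1, Or.inr h.2.2⟩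

/-- For any gadget `G` of type I or of type II (basic or extended)
with designated vertices `p, q`: (1) `G` contains a `(2,b)`-alternating path `R₀` with
`s_1(R₀) = t_1(R₀) = p` and `t_2(R₀) = q`; (2) from every vertex of `G` there is a
directed path inside `G` ending in `{p,q}`. -/
theorem stmt_8 {V : Type*} [Fintype V] (D : V → V → Prop) (hloop : ∀ v, ¬ D v v)
    (b : ℕ) (hb : 1 ≤ b) :
    (∀ G : TypeIGadget D (4 * b ^ 2),
      (∃ R : AltPath G.arcs 2 b, R.s 0 = G.p ∧ R.t 0 = G.p ∧ R.t 1 = G.q) ∧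
      (∀ x ∈ G.verts, ∃ P : List V, IsDipathList G.arcs P ∧ P.head? = some x ∧
        (P.getLast? = some G.p ∨ P.getLast? = some G.q))) ∧
    (∀ G : BasicIIGadget D b,
      (∃ R : AltPath G.arcs 2 b, R.s 0 = G.p ∧ R.t 0 = G.p ∧ R.t 1 = G.q) ∧
      (∀ x ∈ G.verts, ∃ P : List V, IsDipathList G.arcs P ∧ P.head? = some x ∧
        (P.getLast? = some G.p ∨ P.getLast? = some G.q))) ∧
    (∀ G : ExtIIGadget D b,
      (∃ R : AltPath G.arcs 2 b, R.s 0 = G.p ∧ R.t 0 = G.p ∧ R.t 1 = G.q) ∧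
      (∀ x ∈ G.verts, ∃ P : List V, IsDipathList G.arcs P ∧ P.head? = some x ∧
        (P.getLast? = some G.p ∨ P.getLast? = some G.q))) :=
  stmt_8_general D b hb

end Paper
end

section
/- Let b, h, d ≥ 1 be integers, let D' be a digraph and let v ∈ V(D'). Suppose that (1) every vertex of D' reachable from v by a directed path has out-degree at least (h+1)·(d(2b−2)+1)+d, and (2) the number of vertices of D' at distance at most (h+1)(2b−1) from v is less than d^h. Then D' contains a type-III gadget G and a directed path P_0 from v to p(G) such that V(P_0) ∩ V(G) = {p(G)}, |V(G)| ≤ (2h+2)(2b−1) and |V(P_0)| ≤ h(2b−1). -/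
/-! Induction on `h`. The out-degree bound lets one grow greedily a fan of `d` directed paths of
length `2b - 1` from `v`; deleting all their vertices except the tips costs at most
`d(2b - 2) + 1` out-degree. If in the remaining digraph the out-ball of radius `(h + 1)(2b - 1)`
around some tip has fewer than `d ^ h` vertices, induction applies at that tip, and the branch
leading to it prolongs `P₀`. Otherwise these `d` balls lie in the out-ball of radius
`(h + 2)(2b - 1)` around `v`, which has fewer than `d ^ (h + 1)` vertices, so two of them meet;
the two branches followed by paths to a first common vertex form a type-III gadget with
`p = v`. -/

namespace Paper

section

variable {V : Type*} {D D' : V → V → Prop}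

lemma exists_prefix_first {α : Type*} {p : α → Prop} :
    ∀ {l : List α}, (∃ x ∈ l, p x) → ∃ M w, M ++ [w] <+: l ∧ p w ∧ ∀ x ∈ M, ¬ p x
  | [], h => by simp at h
  | a :: l, h => by
    by_cases ha : p a
    · exact ⟨[], a, by simp, ha, by simp⟩
    · obtain ⟨M, w, hMw, hw, hM⟩ := exists_prefix_first (by simpa [ha] using h)
      exact ⟨a :: M, w, by simpa using hMw, hw, by simpa [ha] using hM⟩

lemma exists_ne_inter_nonempty_of_ncard_lt_sum {α ι : Type*} [Finite α] [Fintype ι]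
    {s : ι → Set α} {t : Set α} (hst : ∀ i, s i ⊆ t) (hlt : t.ncard < ∑ i, (s i).ncard) :
    ∃ i j, i ≠ j ∧ (s i ∩ s j).Nonempty := by
  by_contra! h
  have hdisj : Pairwise (Function.onFun Disjoint s) := fun i j hij =>
    Set.disjoint_iff_inter_eq_empty.2 (h i j hij)
  have hunion := Set.ncard_iUnion_of_finite (fun i => Set.toFinite (s i)) hdisj
  rw [finsum_eq_sum_of_fintype] at hunion
  have := Set.ncard_le_ncard (Set.iUnion_subset hst)
  omega

lemma ncard_setOf_mem_le (l : List V) : {x | x ∈ l}.ncard ≤ l.length := by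
  classical
  rw [show {x | x ∈ l} = (l.toFinset : Set V) by ext; simp, Set.ncard_coe_finset]
  exact l.toFinset_card_le

lemma IsDipathList.mono (hDD : ∀ a b, D a b → D' a b) {P : List V} (hP : IsDipathList D P) :
    IsDipathList D' P :=
  ⟨hP.1, hP.2.1, hP.2.2.imp hDD⟩

def IsDipathFromTo (D : V → V → Prop) (P : List V) (x y : V) : Prop :=
  IsDipathList D P ∧ P.head? = some x ∧ P.getLast? = some y

namespace IsDipathFromTo

variable {P Q : List V} {x y z : V}

lemma head_mem (hP : IsDipathFromTo D P x y) : x ∈ P := List.mem_of_mem_head? hP.2.1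

lemma last_mem (hP : IsDipathFromTo D P x y) : y ∈ P := List.mem_of_getLast? hP.2.2

lemma one_le_length (hP : IsDipathFromTo D P x y) : 1 ≤ P.length :=
  List.length_pos_iff.2 hP.1.1

lemma eq_cons (hP : IsDipathFromTo D P x y) : P = x :: P.tail := by
  obtain ⟨a, T, rfl⟩ := List.exists_cons_of_ne_nil hP.1.1
  simpa using hP.2.1

lemma mono (hDD : ∀ a b, D a b → D' a b) (hP : IsDipathFromTo D P x y) :
    IsDipathFromTo D' P x y :=
  ⟨hP.1.mono hDD, hP.2⟩

lemma singleton (x : V) : IsDipathFromTo D [x] x x :=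
  ⟨⟨by simp, by simp, List.isChain_singleton x⟩, rfl, rfl⟩

lemma head_notMem_tail (hP : IsDipathFromTo D P x y) : x ∉ P.tail := by
  have h := hP.1.2.1
  rw [hP.eq_cons] at h
  exact (List.nodup_cons.1 h).1

lemma mem_tail_of_ne (hP : IsDipathFromTo D P x y) (hz : z ∈ P) (hzx : z ≠ x) : z ∈ P.tail := by
  rw [hP.eq_cons] at hz
  exact (List.mem_cons.1 hz).resolve_left hzx

lemma two_le_length (hP : IsDipathFromTo D P x y) (hxy : x ≠ y) : 2 ≤ P.length := by
  obtain ⟨T, rfl⟩ : ∃ T, P = x :: T := ⟨_, hP.eq_cons⟩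
  obtain _ | ⟨a, T⟩ := T
  · exact absurd (by simpa using hP.2.2) hxy
  · simp

lemma reflTransGen (hP : IsDipathFromTo D P x y) (hz : z ∈ P) : Relation.ReflTransGen D x z :=
  hP.1.2.2.induction (Relation.ReflTransGen D x) P (fun _ _ h₁ h₂ => h₂.tail h₁)
    (fun hne => by rw [(List.head_eq_iff_head?_eq_some hne).2 hP.2.1]) z hz

lemma cons (hP : IsDipathFromTo D P x y) (hzx : D z x) (hz : z ∉ P) :
    IsDipathFromTo D (z :: P) z y := by
  obtain ⟨T, rfl⟩ : ∃ T, P = x :: T := ⟨_, hP.eq_cons⟩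
  obtain ⟨⟨-, hnd, hch⟩, -, hl⟩ := hP
  exact ⟨⟨by simp, List.nodup_cons.2 ⟨hz, hnd⟩, List.isChain_cons_cons.2 ⟨hzx, hch⟩⟩, rfl,
    by simpa using hl⟩

lemma tail (hP : IsDipathFromTo D P x y) (hlen : 2 ≤ P.length) :
    ∃ q, D x q ∧ IsDipathFromTo D P.tail q y := by
  obtain ⟨T, rfl⟩ : ∃ T, P = x :: T := ⟨_, hP.eq_cons⟩
  obtain _ | ⟨q, T⟩ := T
  · simp at hlen
  obtain ⟨⟨-, hnd, hch⟩, -, hl⟩ := hP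
  exact ⟨q, (List.isChain_cons_cons.1 hch).1,
    ⟨by simp, (List.nodup_cons.1 hnd).2, (List.isChain_cons_cons.1 hch).2⟩, rfl, by simpa using hl⟩

lemma append (hP : IsDipathFromTo D P x y) (hQ : IsDipathFromTo D Q y z)
    (hPQ : ∀ u ∈ P, u ∈ Q → u = y) : IsDipathFromTo D (P ++ Q.tail) x z := by
  obtain ⟨T, rfl⟩ : ∃ T, Q = y :: T := ⟨_, hQ.eq_cons⟩
  obtain ⟨⟨hPne, hPnd, hPch⟩, hPh, hPl⟩ := hP
  obtain ⟨⟨-, hQnd, hQch⟩, -, hQl⟩ := hQ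
  refine ⟨⟨by simp [hPne], ?_, ?_⟩, by simp [List.head?_append_of_ne_nil _ hPne, hPh], ?_⟩
  · refine List.nodup_append.2 ⟨hPnd, (List.nodup_cons.1 hQnd).2, ?_⟩
    rintro a ha b hb rfl
    exact (List.nodup_cons.1 hQnd).1 (hPQ a ha (List.mem_cons_of_mem _ hb) ▸ hb)
  · refine List.isChain_append.2 ⟨hPch, hQch.tail, fun a ha b hb => ?_⟩
    obtain rfl : a = y := by simpa [hPl] using ha.symm
    exact (List.isChain_cons.1 hQch).1 b hb
  · obtain _ | ⟨c, T⟩ := T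
    · simpa [hPl] using hQl
    · simpa [List.getLast?_append_of_ne_nil] using hQl

lemma of_prefix (hP : IsDipathFromTo D P x y) {R : List V} {w : V} (hR : R ++ [w] <+: P) :
    IsDipathFromTo D (R ++ [w]) x w := by
  refine ⟨⟨by simp, hR.sublist.nodup hP.1.2.1, hP.1.2.2.infix hR.isInfix⟩, ?_, by simp⟩
  obtain ⟨t, rfl⟩ := hR
  simpa [List.head?_append_of_ne_nil] using hP.2.1

lemma exists_prefix_first_mem (hP : IsDipathFromTo D P x y) {S : Set V} (hS : ∃ s ∈ P, s ∈ S) :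
    ∃ R w, IsDipathFromTo D R x w ∧ R <+: P ∧ w ∈ S ∧ ∀ u ∈ R, u ∈ S → u = w := by
  obtain ⟨M, w, hMw, hw, hM⟩ := exists_prefix_first hS
  refine ⟨M ++ [w], w, hP.of_prefix hMw, hMw, hw, fun u hu huS => ?_⟩
  rcases List.mem_append.1 hu with hu | hu
  · exact absurd huS (hM u hu)
  · simpa using hu

lemma exists_prefix_to (hP : IsDipathFromTo D P x y) {w : V} (hw : w ∈ P) :
    ∃ R, IsDipathFromTo D R x w ∧ R <+: P := by
  obtain ⟨R, w', hR, hRP, rfl, -⟩ := hP.exists_prefix_first_mem (S := {w}) ⟨w, hw, rfl⟩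
  exact ⟨R, hR, hRP⟩

end IsDipathFromTo

namespace TypeIIIGadget

variable {b : ℕ}

lemma isDipathFromTo₁ (G : TypeIIIGadget D b) : IsDipathFromTo D G.P₁ G.p G.r :=
  ⟨G.path₁, G.first₁, G.last₁⟩

lemma isDipathFromTo₂ (G : TypeIIIGadget D b) : IsDipathFromTo D G.P₂ G.q G.r :=
  ⟨G.path₂, G.first₂, G.last₂⟩

lemma ncard_verts_lt (G : TypeIIIGadget D b) : G.verts.ncard < G.P₁.length + G.P₂.length := by
  have hr : ({x | x ∈ G.P₁} ∩ {x | x ∈ G.P₂}).Nonempty :=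
    ⟨G.r, G.isDipathFromTo₁.last_mem, G.isDipathFromTo₂.last_mem⟩
  have hunion := Set.ncard_union_add_ncard_inter {x | x ∈ G.P₁} {x | x ∈ G.P₂}
    (List.finite_toSet _) (List.finite_toSet _)
  have hinter := (Set.ncard_pos ((List.finite_toSet _).inter_of_left _)).2 hr
  have h₁ := ncard_setOf_mem_le G.P₁
  have h₂ := ncard_setOf_mem_le G.P₂
  unfold verts
  omega

def mono (hDD : ∀ a b, D a b → D' a b) (G : TypeIIIGadget D b) : TypeIIIGadget D' b :=
  { G with arc := hDD _ _ G.arc, path₁ := G.path₁.mono hDD, path₂ := G.path₂.mono hDD }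

lemma reflTransGen_of_mem_verts (G : TypeIIIGadget D b) {x : V} (hx : x ∈ G.verts) :
    Relation.ReflTransGen D G.p x := by
  rcases hx with hx | hx
  · exact G.isDipathFromTo₁.reflTransGen hx
  · exact .head G.arc (G.isDipathFromTo₂.reflTransGen hx)

end TypeIIIGadget

/-- `P₁` is `F₁` followed by `R₁`, and `P₂` is `F₂` without `v` followed by `R₂`. -/
lemma exists_gadget_of_branches {b : ℕ} (hb : 1 ≤ b) {X : Set V} {F₁ F₂ R₁ R₂ : List V}
    {v y₁ y₂ w : V} (hF₁ : IsDipathFromTo D F₁ v y₁) (hF₂ : IsDipathFromTo D F₂ v y₂)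
    (hR₁ : IsDipathFromTo D R₁ y₁ w) (hR₂ : IsDipathFromTo D R₂ y₂ w)
    (hlF₁ : 2 * b ≤ F₁.length) (hlF₂ : 2 * b ≤ F₂.length) (hlR₂ : 2 ≤ R₂.length)
    (hF : ∀ x ∈ F₁, x ∈ F₂ → x = v) (hR : ∀ x ∈ R₁, x ∈ R₂ → x = w)
    (hF₁X : ∀ x ∈ F₁, x ∉ X → x = y₁) (hF₂X : ∀ x ∈ F₂, x ∉ X → x = y₂)
    (hR₁X : ∀ x ∈ R₁, x ∉ X) (hR₂X : ∀ x ∈ R₂, x ∉ X) :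
    ∃ G : TypeIIIGadget D b, G.p = v ∧
      G.verts.ncard + 4 ≤ F₁.length + F₂.length + R₁.length + R₂.length := by
  obtain ⟨q, hvq, hF₂'⟩ := hF₂.tail (by omega)
  have hP₁ := hF₁.append hR₁ fun x hx hxR => hF₁X x hx (hR₁X x hxR)
  have hP₂ := hF₂'.append hR₂ fun x hx hxR => hF₂X x (List.mem_of_mem_tail hx) (hR₂X x hxR)
  have hdisj : ∀ x ∈ F₁ ++ R₁.tail, x ∈ F₂.tail ++ R₂.tail → x = w := by
    intro x hx₁ hx₂
    simp only [List.mem_append] at hx₁ hx₂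
    rcases hx₁ with hx₁ | hx₁ <;> rcases hx₂ with hx₂ | hx₂
    · exact absurd (hF x hx₁ (List.mem_of_mem_tail hx₂) ▸ hx₂) hF₂.head_notMem_tail
    · obtain rfl := hF₁X x hx₁ (hR₂X x (List.mem_of_mem_tail hx₂))
      exact hR x hR₁.head_mem (List.mem_of_mem_tail hx₂)
    · obtain rfl := hF₂X x (List.mem_of_mem_tail hx₂) (hR₁X x (List.mem_of_mem_tail hx₁))
      exact hR x (List.mem_of_mem_tail hx₁) hR₂.head_mem
    · exact hR x (List.mem_of_mem_tail hx₁) (List.mem_of_mem_tail hx₂)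
  have hlR₁ := hR₁.one_le_length
  let G : TypeIIIGadget D b := ⟨v, q, w, hvq, _, _, hP₁.1, hP₂.1, hP₁.2.1, hP₂.2.1, hP₁.2.2,
    hP₂.2.2, by simp only [List.length_append, List.length_tail]; omega,
    by simp only [List.length_append, List.length_tail]; omega, hdisj⟩
  refine ⟨G, rfl, ?_⟩
  have hG : G.verts.ncard < (F₁ ++ R₁.tail).length + (F₂.tail ++ R₂.tail).length :=
    G.ncard_verts_lt
  simp only [List.length_append, List.length_tail] at hG
  omega

def deleteVerts (D : V → V → Prop) (X : Set V) : V → V → Prop :=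
  fun a b => D a b ∧ a ∉ X ∧ b ∉ X

lemma notMem_of_reflTransGen_deleteVerts {X : Set V} {y u : V} (hy : y ∉ X)
    (h : Relation.ReflTransGen (deleteVerts D X) y u) : u ∉ X := by
  induction h with
  | refl => exact hy
  | tail _ hab _ => exact hab.2.2

lemma outDeg_le_outDeg_deleteVerts_add [Finite V] {X : Set V} {u : V} (hu : u ∉ X) :
    outDeg D u ≤ outDeg (deleteVerts D X) u + X.ncard := by
  have hsub : {w | D u w} ⊆ {w | deleteVerts D X u w} ∪ X := fun w hw => by
    by_cases hwX : w ∈ X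
    · exact Or.inr hwX
    · exact Or.inl ⟨hw, hu, hwX⟩
  exact (Set.ncard_le_ncard hsub).trans (Set.ncard_union_le _ _)

def outBall (D : V → V → Prop) (v : V) (r : ℕ) : Set V :=
  {u | ∃ P : List V, IsDipathList D P ∧ P.head? = some v ∧ P.getLast? = some u ∧
    P.length ≤ r + 1}

lemma mem_outBall {v u : V} {r : ℕ} :
    u ∈ outBall D v r ↔ ∃ P, IsDipathFromTo D P v u ∧ P.length ≤ r + 1 := by
  simp [outBall, IsDipathFromTo, and_assoc]

lemma mem_outBall_self (v : V) (r : ℕ) : v ∈ outBall D v r :=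
  mem_outBall.2 ⟨[v], .singleton v, by simp⟩

lemma exists_arc_notMem [Finite V] {u : V} {S : Set V} (h : S.ncard < outDeg D u) :
    ∃ w, D u w ∧ w ∉ S := by
  by_contra! hS
  exact (Set.ncard_le_ncard (fun w hw => hS w hw) (Set.toFinite S)).not_gt h

lemma exists_dipath_avoiding [Finite V] : ∀ (n : ℕ) {z : V} {S : Set V}, z ∉ S →
    (∀ u, Relation.ReflTransGen D z u → S.ncard + n < outDeg D u) →
    ∃ P y, IsDipathFromTo D P z y ∧ P.length = n + 1 ∧ ∀ x ∈ P, x ∉ S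
  | 0, z, _, hz, _ => ⟨[z], z, .singleton z, rfl, by simpa using hz⟩
  | n + 1, z, S, hz, hdeg => by
    have hins := Set.ncard_insert_le z S
    obtain ⟨w, hzw, hw⟩ := exists_arc_notMem (D := D) (u := z) (S := insert z S)
      (by have := hdeg z .refl; omega)
    obtain ⟨P, y, hP, hlen, hPS⟩ := exists_dipath_avoiding n hw fun u hu => by
      have := hdeg u (hu.head hzw); omega
    refine ⟨z :: P, y, hP.cons hzw fun hzP => hPS z hzP (Set.mem_insert z S), by simp [hlen], ?_⟩
    rintro x (_ | ⟨_, hx⟩)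
    · exact hz
    · exact fun hxS => hPS x hx (Set.mem_insert_of_mem z hxS)

structure Fan (D : V → V → Prop) (v : V) (d L : ℕ) where
  path : Fin d → List V
  tip : Fin d → V
  isDipathFromTo : ∀ c, IsDipathFromTo D (path c) v (tip c)
  length_path : ∀ c, (path c).length = L + 1
  pairwise : Pairwise fun c c' => ∀ x ∈ path c, x ∈ path c' → x = v

namespace Fan

variable {v : V} {d L : ℕ}

lemma nonempty [Finite V] :
    ∀ {d : ℕ}, (∀ u, Relation.ReflTransGen D v u → d * L < outDeg D u) → Nonempty (Fan D v d L)
  | 0, _ => ⟨⟨Fin.elim0, Fin.elim0, fun c => c.elim0, fun c => c.elim0, fun c => c.elim0⟩⟩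
  | d + 1, hdeg => by
    obtain ⟨F⟩ := nonempty (d := d) fun u hu =>
      (Nat.mul_le_mul_right L d.le_succ).trans_lt (hdeg u hu)
    set S := ⋃ c, {x | x ∈ (F.path c).tail}
    have hS : S.ncard ≤ d * L := (Set.ncard_iUnion_le_of_fintype _).trans <|
      calc ∑ c, {x | x ∈ (F.path c).tail}.ncard ≤ ∑ _c : Fin d, L :=
            Finset.sum_le_sum fun c _ => (ncard_setOf_mem_le _).trans (by simp [F.length_path])
        _ = d * L := by simp
    have hvS : v ∉ S := by
      simp only [S, Set.mem_iUnion, Set.mem_ofPred_eq, not_exists]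
      exact fun c => (F.isDipathFromTo c).head_notMem_tail
    obtain ⟨B, y, hB, hlB, hBS⟩ := exists_dipath_avoiding L hvS fun u hu => by
      have := hdeg u hu; rw [Nat.succ_mul] at this; omega
    have hBF : ∀ c, ∀ x ∈ B, x ∈ F.path c → x = v := fun c x hxB hxc => by
      by_contra hxv
      refine hBS x hxB (Set.mem_iUnion.2 ⟨c, ?_⟩)
      exact (F.isDipathFromTo c).mem_tail_of_ne hxc hxv
    refine ⟨⟨Fin.cons B F.path, Fin.cons y F.tip, Fin.forall_fin_succ.2 ⟨by simpa using hB,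
      by simpa using F.isDipathFromTo⟩, Fin.forall_fin_succ.2 ⟨by simpa using hlB,
      by simpa using F.length_path⟩, pairwise_fin_succ_iff.2 ⟨?_, ?_, ?_⟩⟩⟩
    · simpa using fun c x h₁ h₂ => hBF c x h₂ h₁
    · simpa using hBF
    · simpa using F.pairwise

variable (F : Fan D v d L)

def core : Set V := {x | ∃ c, x ∈ F.path c ∧ x ≠ F.tip c}

lemma eq_tip_of_notMem_core {c : Fin d} {x : V} (hx : x ∈ F.path c) (hxX : x ∉ F.core) :
    x = F.tip c :=
  by_contra fun h => hxX ⟨c, hx, h⟩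

lemma tip_ne (hL : 1 ≤ L) (c : Fin d) : F.tip c ≠ v := by
  obtain ⟨q, -, hq⟩ := (F.isDipathFromTo c).tail (by rw [F.length_path]; omega)
  intro h
  rw [h] at hq
  exact (F.isDipathFromTo c).head_notMem_tail hq.last_mem

lemma tip_notMem_core (hL : 1 ≤ L) (c : Fin d) : F.tip c ∉ F.core := by
  rintro ⟨c', hc', hne⟩
  have hcc : c ≠ c' := by rintro rfl; exact hne rfl
  exact F.tip_ne hL c (F.pairwise hcc _ (F.isDipathFromTo c).last_mem hc')

lemma ncard_core_le (hL : 1 ≤ L) : F.core.ncard ≤ d * (L - 1) + 1 := by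
  set s := fun c => {x | x ∈ F.path c} \ {v, F.tip c}
  have hsub : F.core ⊆ insert v (⋃ c, s c) := by
    rintro x ⟨c, hx, hxy⟩
    by_cases hxv : x = v
    · exact Or.inl hxv
    · exact Or.inr (Set.mem_iUnion.2 ⟨c, hx, by simp [hxv, hxy]⟩)
  have hs : ∀ c, (s c).ncard ≤ L - 1 := fun c => by
    have hpair : ({v, F.tip c} : Set V).ncard = 2 := Set.ncard_pair (F.tip_ne hL c).symm
    have hend : ({v, F.tip c} : Set V) ⊆ {x | x ∈ F.path c} :=
      Set.insert_subset_iff.2 ⟨(F.isDipathFromTo c).head_mem,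
        Set.singleton_subset_iff.2 (F.isDipathFromTo c).last_mem⟩
    have hdiff : (s c).ncard + 2 = {x | x ∈ F.path c}.ncard := by
      rw [← hpair]; exact Set.ncard_sdiff_add_ncard_of_subset hend (List.finite_toSet _)
    have hlen := ncard_setOf_mem_le (F.path c)
    rw [F.length_path] at hlen
    omega
  have hfin : (insert v (⋃ c, s c)).Finite :=
    (Set.finite_iUnion fun _ => (List.finite_toSet _).sdiff).insert v
  calc F.core.ncard ≤ (insert v (⋃ c, s c)).ncard := Set.ncard_le_ncard hsub hfin
    _ ≤ (⋃ c, s c).ncard + 1 := Set.ncard_insert_le _ _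
    _ ≤ ∑ c, (s c).ncard + 1 := by gcongr; exact Set.ncard_iUnion_le_of_fintype _
    _ ≤ ∑ _c : Fin d, (L - 1) + 1 := by gcongr with c; exact hs c
    _ = d * (L - 1) + 1 := by simp

lemma notMem_core_of_reflTransGen (hL : 1 ≤ L) {c : Fin d} {u : V}
    (h : Relation.ReflTransGen (deleteVerts D F.core) (F.tip c) u) : u ∉ F.core :=
  notMem_of_reflTransGen_deleteVerts (F.tip_notMem_core hL c) h

lemma isDipathFromTo_append (hL : 1 ≤ L) {c : Fin d} {Q : List V} {z : V}
    (hQ : IsDipathFromTo (deleteVerts D F.core) Q (F.tip c) z) :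
    IsDipathFromTo D (F.path c ++ Q.tail) v z :=
  (F.isDipathFromTo c).append (hQ.mono fun _ _ h => h.1) fun _ hu huQ =>
    F.eq_tip_of_notMem_core hu (F.notMem_core_of_reflTransGen hL (hQ.reflTransGen huQ))

lemma outBall_deleteVerts_subset (hL : 1 ≤ L) (c : Fin d) {r r' : ℕ} (hr : L + r ≤ r') :
    outBall (deleteVerts D F.core) (F.tip c) r ⊆ outBall D v r' := fun z hz => by
  obtain ⟨Q, hQ, hlQ⟩ := mem_outBall.1 hz
  refine mem_outBall.2 ⟨_, F.isDipathFromTo_append hL hQ, ?_⟩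
  simp only [List.length_append, List.length_tail, F.length_path]
  omega

end Fan

def ReachesGadget (D : V → V → Prop) (b h : ℕ) (v : V) : Prop :=
  ∃ (G : TypeIIIGadget D b) (P₀ : List V),
    IsDipathList D P₀ ∧ P₀.head? = some v ∧ P₀.getLast? = some G.p ∧
    (∀ x ∈ P₀, x ∈ G.verts → x = G.p) ∧
    G.verts.ncard ≤ (2 * h + 2) * (2 * b - 1) ∧
    P₀.length ≤ h * (2 * b - 1)

namespace Fan

variable {v : V} {b h d : ℕ} (F : Fan D v d (2 * b - 1))

lemma reachesGadget_of_tip (hb : 1 ≤ b) (c : Fin d)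
    (hG : ReachesGadget (deleteVerts D F.core) b h (F.tip c)) : ReachesGadget D b (h + 1) v := by
  have hL : 1 ≤ 2 * b - 1 := by omega
  obtain ⟨G, P₀, hP₀, hhead, hlast, hdisj, hsize, hlen⟩ := hG
  have hP₀' : IsDipathFromTo _ P₀ (F.tip c) G.p := ⟨hP₀, hhead, hlast⟩
  have hGX : ∀ x ∈ G.verts, x ∉ F.core := fun x hx => F.notMem_core_of_reflTransGen hL
    ((hP₀'.reflTransGen hP₀'.last_mem).trans (G.reflTransGen_of_mem_verts hx))
  have hP := F.isDipathFromTo_append hL hP₀'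
  refine ⟨G.mono fun _ _ h => h.1, _, hP.1, hP.2.1, hP.2.2, fun x hx hxG => ?_,
    hsize.trans (Nat.mul_le_mul_right _ (by omega)), ?_⟩
  · rcases List.mem_append.1 hx with hx | hx
    · obtain rfl := F.eq_tip_of_notMem_core hx (hGX x hxG)
      exact hdisj _ hP₀'.head_mem hxG
    · exact hdisj x (List.mem_of_mem_tail hx) hxG
  · have := add_one_mul h (2 * b - 1)
    have := hP₀'.one_le_length
    simp only [List.length_append, List.length_tail, F.length_path]
    omega

lemma exists_gadget_of_meet (hb : 1 ≤ b) {c₁ c₂ : Fin d} (hc : c₁ ≠ c₂) {Q₁ Q₂ : List V} {z : V}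
    (hQ₁ : IsDipathFromTo (deleteVerts D F.core) Q₁ (F.tip c₁) z)
    (hQ₂ : IsDipathFromTo (deleteVerts D F.core) Q₂ (F.tip c₂) z) :
    ∃ G : TypeIIIGadget D b, G.p = v ∧ G.verts.ncard + 4 ≤ 4 * b + Q₁.length + Q₂.length := by
  have hL : 1 ≤ 2 * b - 1 := by omega
  -- `w` is the first vertex of `Q₂` on `Q₁`; the branch whose path to `w` is not trivial
  -- carries `P₂` of the gadget.
  obtain ⟨R₂, w, hR₂, hpre₂, hw, hR₂Q₁⟩ :=
    hQ₂.exists_prefix_first_mem (S := {x | x ∈ Q₁}) ⟨z, hQ₂.last_mem, hQ₁.last_mem⟩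
  obtain ⟨R₁, hR₁, hpre₁⟩ := hQ₁.exists_prefix_to hw
  have hR : ∀ x ∈ R₁, x ∈ R₂ → x = w := fun x h₁ h₂ => hR₂Q₁ x h₂ (hpre₁.subset h₁)
  have hR₁X : ∀ x ∈ R₁, x ∉ F.core := fun x hx =>
    F.notMem_core_of_reflTransGen hL (hR₁.reflTransGen hx)
  have hR₂X : ∀ x ∈ R₂, x ∉ F.core := fun x hx =>
    F.notMem_core_of_reflTransGen hL (hR₂.reflTransGen hx)
  have hDD : ∀ a b, deleteVerts D F.core a b → D a b := fun _ _ h => h.1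
  have hF₁ := F.isDipathFromTo c₁
  have hF₂ := F.isDipathFromTo c₂
  have hlF₁ := F.length_path c₁
  have hlF₂ := F.length_path c₂
  have hlR₁ := hpre₁.length_le
  have hlR₂ := hpre₂.length_le
  by_cases hw₂ : F.tip c₂ = w
  · have htip : F.tip c₁ ≠ w := fun h₁ =>
      F.tip_ne hL c₁ (F.pairwise hc _ hF₁.last_mem (h₁ ▸ hw₂ ▸ hF₂.last_mem))
    obtain ⟨G, hGp, hG⟩ := exists_gadget_of_branches hb hF₂ hF₁ (hR₂.mono hDD) (hR₁.mono hDD)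
      (by omega) (by omega) (hR₁.two_le_length htip)
      (fun x h₂ h₁ => F.pairwise hc x h₁ h₂) (fun x h₂ h₁ => hR x h₁ h₂)
      (fun x hx => F.eq_tip_of_notMem_core hx) (fun x hx => F.eq_tip_of_notMem_core hx)
      hR₂X hR₁X
    exact ⟨G, hGp, by omega⟩
  · obtain ⟨G, hGp, hG⟩ := exists_gadget_of_branches hb hF₁ hF₂ (hR₁.mono hDD) (hR₂.mono hDD)
      (by omega) (by omega) (hR₂.two_le_length hw₂)
      (fun x h₁ h₂ => F.pairwise hc x h₁ h₂) hR
      (fun x hx => F.eq_tip_of_notMem_core hx) (fun x hx => F.eq_tip_of_notMem_core hx)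
      hR₁X hR₂X
    exact ⟨G, hGp, by omega⟩

lemma reachesGadget_of_meet (hb : 1 ≤ b) {c₁ c₂ : Fin d} (hc : c₁ ≠ c₂) {z : V}
    (hz₁ : z ∈ outBall (deleteVerts D F.core) (F.tip c₁) ((h + 1) * (2 * b - 1)))
    (hz₂ : z ∈ outBall (deleteVerts D F.core) (F.tip c₂) ((h + 1) * (2 * b - 1))) :
    ReachesGadget D b (h + 1) v := by
  obtain ⟨Q₁, hQ₁, hlQ₁⟩ := mem_outBall.1 hz₁
  obtain ⟨Q₂, hQ₂, hlQ₂⟩ := mem_outBall.1 hz₂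
  obtain ⟨G, hGp, hG⟩ := F.exists_gadget_of_meet hb hc hQ₁ hQ₂
  refine ⟨G, [v], (IsDipathFromTo.singleton v).1, rfl, by simp [hGp], by simp [hGp], ?_, ?_⟩
  · have : (2 * (h + 1) + 2) * (2 * b - 1) = 2 * (2 * b - 1) + 2 * ((h + 1) * (2 * b - 1)) := by
      ring
    omega
  · simpa using Nat.one_le_iff_ne_zero.2 (Nat.mul_ne_zero (by omega) (by omega))

end Fan

lemma reachesGadget_succ [Finite V] {b h d : ℕ} (hb : 1 ≤ b) {v : V}
    (ih : ∀ (D' : V → V → Prop) (v' : V),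
      (∀ u, Relation.ReflTransGen D' v' u →
        (h + 1) * (d * (2 * b - 2) + 1) + d ≤ outDeg D' u) →
      (outBall D' v' ((h + 1) * (2 * b - 1))).ncard < d ^ h → ReachesGadget D' b h v')
    (hdeg : ∀ u, Relation.ReflTransGen D v u →
      (h + 1 + 1) * (d * (2 * b - 2) + 1) + d ≤ outDeg D u)
    (hdist : (outBall D v ((h + 1 + 1) * (2 * b - 1))).ncard < d ^ (h + 1)) :
    ReachesGadget D b (h + 1) v := by
  have hL : 1 ≤ 2 * b - 1 := by omega
  have hK : 2 * b - 1 - 1 = 2 * b - 2 := by omega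
  obtain ⟨F⟩ := Fan.nonempty (D := D) (d := d) (L := 2 * b - 1) fun u hu => by
    have := hdeg u hu
    have : d * (2 * b - 1) = d * (2 * b - 2) + d := by rw [← Nat.mul_add_one]; congr 1; omega
    have := Nat.le_mul_of_pos_left (d * (2 * b - 2) + 1) (show 0 < h + 1 + 1 by omega)
    omega
  let ball (c : Fin d) := outBall (deleteVerts D F.core) (F.tip c) ((h + 1) * (2 * b - 1))
  by_cases hsmall : ∃ c, (ball c).ncard < d ^ h
  · obtain ⟨c, hc⟩ := hsmall
    refine F.reachesGadget_of_tip hb c (ih _ _ (fun u hu => ?_) hc)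
    have h₁ := hdeg u (((F.isDipathFromTo c).reflTransGen (F.isDipathFromTo c).last_mem).trans
      (Relation.ReflTransGen.mono (fun _ _ h => h.1) _ _ hu))
    have h₂ := outDeg_le_outDeg_deleteVerts_add (D := D) (F.notMem_core_of_reflTransGen hL hu)
    have h₃ := F.ncard_core_le hL
    rw [add_one_mul (h + 1)] at h₁
    rw [hK] at h₃
    omega
  · push Not at hsmall
    obtain ⟨c₁, c₂, hc, z, hz₁, hz₂⟩ := exists_ne_inter_nonempty_of_ncard_lt_sum (s := ball)
      (fun c => F.outBall_deleteVerts_subset hL c (by rw [add_one_mul (h + 1)]; omega)) <|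
      calc _ < d ^ (h + 1) := hdist
        _ = ∑ _c : Fin d, d ^ h := by simp [pow_succ, mul_comm]
        _ ≤ _ := Finset.sum_le_sum fun c _ => hsmall c
    exact F.reachesGadget_of_meet hb hc hz₁ hz₂

end

theorem stmt_14_general {V : Type*} [Fintype V] (D : V → V → Prop)
    (b h d : ℕ) (hb : 1 ≤ b) (v : V)
    (hdeg : ∀ u, Relation.ReflTransGen D v u →
      (h + 1) * (d * (2 * b - 2) + 1) + d ≤ outDeg D u)
    (hdist : ({u | ∃ P : List V, IsDipathList D P ∧ P.head? = some v ∧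
        P.getLast? = some u ∧ P.length ≤ (h + 1) * (2 * b - 1) + 1}).ncard < d ^ h) :
    ∃ (G : TypeIIIGadget D b) (P₀ : List V),
      IsDipathList D P₀ ∧ P₀.head? = some v ∧ P₀.getLast? = some G.p ∧
      (∀ x ∈ P₀, x ∈ G.verts → x = G.p) ∧
      G.verts.ncard ≤ (2 * h + 2) * (2 * b - 1) ∧
      P₀.length ≤ h * (2 * b - 1) := by
  induction h generalizing D v with
  | zero =>
    have hv : 0 < (outBall D v ((0 + 1) * (2 * b - 1))).ncard :=
      (Set.ncard_pos (Set.toFinite _)).2 ⟨v, mem_outBall_self v _⟩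
    change (outBall D v ((0 + 1) * (2 * b - 1))).ncard < d ^ 0 at hdist
    rw [pow_zero] at hdist
    omega
  | succ h ih => exact reachesGadget_succ hb ih hdeg hdist

/-- Suppose every vertex reachable from `v` in `D'` has out-degree at
least `(h+1)·(d(2b−2)+1) + d`, and fewer than `d^h` vertices of `D'` are at distance at
most `(h+1)(2b−1)` from `v`. Then `D'` contains a type-III gadget `G` together with a
directed path `P₀` from `v` to `p(G)` meeting `G` only in `p(G)`, with
`|V(G)| ≤ (2h+2)(2b−1)` and `|V(P₀)| ≤ h(2b−1)`. -/
theorem stmt_14 {V : Type*} [Fintype V] (D : V → V → Prop) (hloop : ∀ v, ¬ D v v)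
    (b h d : ℕ) (hb : 1 ≤ b) (hh : 1 ≤ h) (hd : 1 ≤ d) (v : V)
    (hdeg : ∀ u, Relation.ReflTransGen D v u →
      (h + 1) * (d * (2 * b - 2) + 1) + d ≤ outDeg D u)
    (hdist : ({u | ∃ P : List V, IsDipathList D P ∧ P.head? = some v ∧
        P.getLast? = some u ∧ P.length ≤ (h + 1) * (2 * b - 1) + 1}).ncard < d ^ h) :
    ∃ (G : TypeIIIGadget D b) (P₀ : List V),
      IsDipathList D P₀ ∧ P₀.head? = some v ∧ P₀.getLast? = some G.p ∧
      (∀ x ∈ P₀, x ∈ G.verts → x = G.p) ∧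
      G.verts.ncard ≤ (2 * h + 2) * (2 * b - 1) ∧
      P₀.length ≤ h * (2 * b - 1) :=
  stmt_14_general D b h d hb v hdeg hdist

end Paper
end

section
/- Let ℓ_1, ℓ_2 ∈ ℕ and let D be a digraph with minimum out-degree δ+(D) ≥ ℓ_1 + ℓ_2. Then for every vertex v ∈ V(D) there are directed paths P_1 and P_2 in D, of lengths ℓ_1 and ℓ_2 respectively, which both start at v and satisfy V(P_1) ∩ V(P_2) = {v}. -/
namespace Paper

section DirectedPaths

variable {V : Type*} {D : V → V → Prop}

lemma exists_adj_notMem_of_card_lt_outDeg {S : Finset V} {u : V} (h : S.card < outDeg D u) :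
    ∃ w, D u w ∧ w ∉ S := by
  by_contra! hS
  have hsub : {w | D u w} ⊆ ↑S := hS
  exact h.not_ge <|
    (Set.ncard_le_ncard hsub S.finite_toSet).trans_eq (Set.ncard_coe_finset S)

lemma IsDipathList.cons {p : List V} (hp : IsDipathList D p) {u w : V}
    (hhead : p.head? = some w) (huw : D u w) (hu : u ∉ p) : IsDipathList D (u :: p) := by
  obtain ⟨t, rfl⟩ := List.head?_eq_some_iff.mp hhead
  exact ⟨List.cons_ne_nil _ _, List.nodup_cons.mpr ⟨hu, hp.2.1⟩,
    List.isChain_cons_cons.mpr ⟨huw, hp.2.2⟩⟩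

/-- Greedy construction: when leaving the `k`-th vertex, only `S` and the `k - 1` earlier
vertices are to be avoided, fewer than the out-degree; the current vertex itself is never an
out-neighbour since `D` is loopless. -/
lemma exists_dipath_avoiding_s15 [DecidableEq V] (hloop : ∀ v, ¬ D v v) (n : ℕ) (S : Finset V)
    (u : V) (hu : u ∉ S) (hdeg : ∀ x, S.card + n ≤ outDeg D x) :
    ∃ p : List V, IsDipathList D p ∧ p.head? = some u ∧ p.length = n + 1 ∧
      ∀ x ∈ p, x ∉ S := by
  induction n generalizing S u with
  | zero =>
    exact ⟨[u], ⟨List.cons_ne_nil _ _, List.nodup_singleton u, List.isChain_singleton u⟩,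
      rfl, rfl, by simpa using hu⟩
  | succ n ih =>
    obtain ⟨w, huw, hwS⟩ : ∃ w, D u w ∧ w ∉ S :=
      exists_adj_notMem_of_card_lt_outDeg (by have := hdeg u; omega)
    have hwu : w ≠ u := fun h => hloop u (h ▸ huw)
    have hcard : (insert u S).card = S.card + 1 := Finset.card_insert_of_notMem hu
    obtain ⟨p, hp, hhead, hlen, havoid⟩ := ih (insert u S) w
      (by simp [hwu, hwS]) (fun x => by have := hdeg x; omega)
    refine ⟨u :: p, hp.cons hhead huw fun hup => havoid u hup (S.mem_insert_self u), rfl,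
      by simp [hlen], ?_⟩
    rintro x (_ | ⟨_, hx⟩)
    · exact hu
    · exact fun hxS => havoid x hx (Finset.mem_insert_of_mem hxS)

end DirectedPaths

theorem stmt_15_general {V : Type*} (D : V → V → Prop) (hloop : ∀ v, ¬ D v v)
    (ℓ₁ ℓ₂ : ℕ) (hdeg : ∀ v, ℓ₁ + ℓ₂ ≤ outDeg D v) (v : V) :
    ∃ P₁ P₂ : List V,
      IsDipathList D P₁ ∧ IsDipathList D P₂ ∧
      P₁.head? = some v ∧ P₂.head? = some v ∧
      P₁.length = ℓ₁ + 1 ∧ P₂.length = ℓ₂ + 1 ∧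
      (∀ x ∈ P₁, x ∈ P₂ → x = v) := by
  classical
  obtain ⟨P₁, hP₁, hv₁, hlen₁, -⟩ := exists_dipath_avoiding_s15 hloop ℓ₁ ∅ v
    (Finset.notMem_empty v)
    (fun x => by simpa using (Nat.le_add_right ℓ₁ ℓ₂).trans (hdeg x))
  obtain ⟨t, rfl⟩ := List.head?_eq_some_iff.mp hv₁
  obtain ⟨hvt, ht⟩ := List.nodup_cons.mp hP₁.2.1
  have hcard : t.toFinset.card = ℓ₁ := by
    rw [List.toFinset_card_of_nodup ht]
    simpa using hlen₁
  obtain ⟨P₂, hP₂, hv₂, hlen₂, hP₂t⟩ :=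
    exists_dipath_avoiding_s15 hloop ℓ₂ t.toFinset v
      (by simpa using hvt) (by rwa [hcard])
  refine ⟨v :: t, P₂, hP₁, hP₂, hv₁, hv₂, hlen₁, hlen₂, ?_⟩
  rintro x (_ | ⟨_, hxt⟩) hx₂
  · rfl
  · exact absurd (List.mem_toFinset.mpr hxt) (hP₂t x hx₂)

/-- If `δ⁺(D) ≥ ℓ₁ + ℓ₂`, then from every vertex `v` there are two
directed paths of lengths `ℓ₁` and `ℓ₂` starting at `v` and sharing only `v`. -/
theorem stmt_15 {V : Type*} [Fintype V] (D : V → V → Prop) (hloop : ∀ v, ¬ D v v)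
    (ℓ₁ ℓ₂ : ℕ) (hdeg : ∀ v, ℓ₁ + ℓ₂ ≤ outDeg D v) (v : V) :
    ∃ P₁ P₂ : List V,
      IsDipathList D P₁ ∧ IsDipathList D P₂ ∧
      P₁.head? = some v ∧ P₂.head? = some v ∧
      P₁.length = ℓ₁ + 1 ∧ P₂.length = ℓ₂ + 1 ∧
      (∀ x ∈ P₁, x ∈ P₂ → x = v) :=
  stmt_15_general D hloop ℓ₁ ℓ₂ hdeg v

end Paper
end

section
/- Let D be a digraph, let v ∈ V(D), let A ⊆ V(D)∖{v}, and let k ∈ ℕ. Then either there are k distinct v-A-dipaths in D which pairwise intersect only in the vertex v, or there is a set K ⊆ V(D)∖{v} with |K| < k such that in D − K there is no directed path starting at v and ending in A. -/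
/-!
Menger's theorem in its set form: if every vertex set meeting all directed walks from `X` to `A`
has at least `k` vertices, there are `k` disjoint `X`–`A` dipaths. The proof is Göring's induction
on the number of arcs. Delete an arc `xy`. If the smaller digraph still has no small separator,
induction applies directly. Otherwise it has a separator `S` with `|S| < k`, and `S ∪ {x}` and
`S ∪ {y}` are separators of `D` of size `k`. Induction then gives `k` disjoint paths from `X` to
`S ∪ {x}` and `k` disjoint paths from `S ∪ {y}` to `A`, all avoiding `xy`. A path of the first
family meets one of the second only in a vertex of `S`, where the first ends and the second
starts, so the two families glue along `S` and along the arc `xy`.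

For the fan version, delete the arcs into `v` and take `X` to be the out-neighbourhood of `v`:
prepending `v` to `k` disjoint `X`–`A` paths gives the fan, and a separator `K` yields the
separator `K ∖ {v}` for the fan.
-/

namespace List

variable {α : Type*}

theorem IsChain.imp_of_mem_dropLast_imp {R S : α → α → Prop} {l : List α}
    (H : ∀ a b, a ∈ l.dropLast → b ∈ l → R a b → S a b) (p : l.IsChain R) : l.IsChain S := by
  induction p with grind

theorem exists_split_at_first_mem {s : Set α} {l : List α} (h : ∃ a ∈ l, a ∈ s) :
    ∃ l₁ a l₂, l = l₁ ++ a :: l₂ ∧ a ∈ s ∧ ∀ z ∈ l₁, z ∉ s := by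
  classical
  obtain ⟨a, ha⟩ := Option.isSome_iff_exists.mp (find?_isSome.mpr (by simpa using h) :
    (l.find? (· ∈ s)).isSome)
  obtain ⟨has, l₁, l₂, rfl, hl₁⟩ := find?_eq_some_iff_append.mp ha
  exact ⟨l₁, a, l₂, rfl, by simpa using has, by simpa using hl₁⟩

theorem exists_split_at_last_mem {s : Set α} {l : List α} (h : ∃ a ∈ l, a ∈ s) :
    ∃ l₁ a l₂, l = l₁ ++ a :: l₂ ∧ a ∈ s ∧ ∀ z ∈ l₂, z ∉ s := by
  obtain ⟨l₁, a, l₂, hl, ha, hl₁⟩ :=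
    exists_split_at_first_mem (l := l.reverse) (s := s) (by simpa using h)
  refine ⟨l₂.reverse, a, l₁.reverse, ?_, ha, by simpa using hl₁⟩
  rw [← reverse_reverse l, hl]
  simp

end List

namespace Paper

open List

variable {V : Type*} {D D' : V → V → Prop} {X A : Set V} {p q : List V}

section Dipaths

theorem IsDipathList.ne_nil (hp : IsDipathList D p) : p ≠ [] := hp.1

theorem IsDipathList.nodup (hp : IsDipathList D p) : p.Nodup := hp.2.1

theorem IsDipathList.isChain (hp : IsDipathList D p) : p.IsChain D := hp.2.2

theorem IsDipathList.mono_s16 (h : ∀ u w, D' u w → D u w) (hp : IsDipathList D' p) :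
    IsDipathList D p :=
  ⟨hp.ne_nil, hp.nodup, hp.isChain.imp h⟩

theorem IsDipathList.append (hp : IsDipathList D p) (hq : IsDipathList D q) (hpq : p.Disjoint q)
    (h : ∀ a ∈ p.getLast?, ∀ b ∈ q.head?, D a b) : IsDipathList D (p ++ q) :=
  ⟨by simp [hp.ne_nil],
    nodup_append.mpr ⟨hp.nodup, hq.nodup, fun _ ha _ hb hab => hpq ha (hab ▸ hb)⟩,
    hp.isChain.append hq.isChain h⟩

theorem IsDipathList.exists_join {a b : V} (hp : IsDipathList D p) (hq : IsDipathList D q)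
    (ha : p.getLast? = some a) (hb : q.head? = some b) (hab : a = b ∨ D a b)
    (hpq : ∀ z ∈ p, z ∈ q → z = a ∧ z = b) :
    ∃ r, IsDipathList D r ∧ r.head? = p.head? ∧ r.getLast? = q.getLast? ∧
      ∀ z ∈ r, z ∈ p ∨ z ∈ q := by
  obtain ⟨q', rfl⟩ := head?_eq_some_iff.mp hb
  by_cases hab' : a = b
  · subst hab'
    rcases eq_or_ne q' [] with rfl | hq'
    · exact ⟨p, hp, rfl, ha, fun z hz => Or.inl hz⟩
    obtain ⟨haq', hq'nd⟩ := nodup_cons.mp hq.nodup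
    refine ⟨p ++ q', hp.append ⟨hq', hq'nd, hq.isChain.tail⟩ (fun z hzp hzq => ?_) ?_,
      head?_append_of_ne_nil _ hp.ne_nil,
      by rw [getLast?_append_of_ne_nil _ hq', getLast?_cons_of_ne_nil hq'], fun z hz => ?_⟩
    · exact haq' ((hpq z hzp (mem_cons_of_mem a hzq)).1 ▸ hzq)
    · rw [ha]
      rintro _ ⟨⟩
      exact (isChain_cons.mp hq.isChain).1
    · rcases mem_append.mp hz with h | h
      · exact Or.inl h
      · exact Or.inr (mem_cons_of_mem a h)
  · refine ⟨p ++ b :: q', hp.append hq (fun z hzp hzq => ?_) ?_, head?_append_of_ne_nil _ hp.ne_nil,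
      getLast?_append_of_ne_nil _ (cons_ne_nil b q'), fun z hz => mem_append.mp hz⟩
    · obtain ⟨rfl, rfl⟩ := hpq z hzp hzq
      exact hab' rfl
    · rw [ha]
      rintro _ ⟨⟩ _ ⟨⟩
      exact hab.resolve_left hab'

end Dipaths

section DipathsBetween

structure IsDipathBetween (D : V → V → Prop) (X A : Set V) (p : List V) : Prop where
  isDipath : IsDipathList D p
  head_mem : ∃ x ∈ X, p.head? = some x
  getLast_mem : ∃ a ∈ A, p.getLast? = some a
  tail_notMem : ∀ z ∈ p.tail, z ∉ X
  dropLast_notMem : ∀ z ∈ p.dropLast, z ∉ A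

theorem IsDipathBetween.mono_s16 (h : ∀ u w, D' u w → D u w) (hp : IsDipathBetween D' X A p) :
    IsDipathBetween D X A p :=
  ⟨hp.isDipath.mono_s16 h, hp.head_mem, hp.getLast_mem, hp.tail_notMem, hp.dropLast_notMem⟩

theorem IsDipathBetween.head?_eq_of_mem (hp : IsDipathBetween D X A p) {z : V} (hz : z ∈ p)
    (hzX : z ∈ X) : p.head? = some z := by
  obtain ⟨w, t, rfl⟩ := exists_cons_of_ne_nil hp.isDipath.ne_nil
  rcases mem_cons.mp hz with rfl | hzt
  · rfl
  · exact absurd hzX (hp.tail_notMem z hzt)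

theorem IsDipathBetween.getLast?_eq_of_mem (hp : IsDipathBetween D X A p) {z : V} (hz : z ∈ p)
    (hzA : z ∈ A) : p.getLast? = some z := by
  rw [← dropLast_concat_getLast hp.isDipath.ne_nil, mem_append, mem_singleton] at hz
  rcases hz with hz | rfl
  · exact absurd hzA (hp.dropLast_notMem z hz)
  · exact getLast?_eq_some_getLast hp.isDipath.ne_nil

theorem IsDipathList.exists_isDipathBetween_infix (hp : IsDipathList D p)
    (hX : ∃ x ∈ X, p.head? = some x) (hA : ∃ a ∈ A, p.getLast? = some a) :
    ∃ q, q <:+: p ∧ IsDipathBetween D X A q := by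
  obtain ⟨x, hxX, hx⟩ := hX
  obtain ⟨a, haA, ha⟩ := hA
  obtain ⟨l₁, a, l₂, rfl, haA, hl₁⟩ :=
    exists_split_at_first_mem ⟨a, mem_of_mem_getLast? ha, haA⟩
  have hxl : x ∈ l₁ ++ [a] := by
    cases l₁ <;> simp_all
  obtain ⟨m₁, b, m₂, hm, hbX, hm₂⟩ := exists_split_at_last_mem ⟨x, hxl, hxX⟩
  have hinf : b :: m₂ <:+: l₁ ++ a :: l₂ :=
    (hm ▸ suffix_append m₁ (b :: m₂)).isInfix.trans (IsPrefix.isInfix ⟨l₂, by simp⟩)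
  refine ⟨b :: m₂, hinf, ⟨cons_ne_nil b m₂, hp.nodup.sublist hinf.sublist,
    hp.isChain.infix hinf⟩, ⟨b, hbX, rfl⟩, ⟨a, haA, ?_⟩, hm₂, fun z hz => hl₁ z ?_⟩
  · have := congrArg getLast? hm
    rwa [getLast?_concat, getLast?_append_of_ne_nil _ (cons_ne_nil _ _), eq_comm] at this
  · have := congrArg dropLast hm
    rw [dropLast_concat, dropLast_append_cons] at this
    exact this ▸ mem_append_right m₁ hz

theorem IsDipathList.exists_isDipathBetween_of_join {a b : V} (hp : IsDipathList D p)
    (hq : IsDipathList D q) (hX : ∃ x ∈ X, p.head? = some x) (hA : ∃ a ∈ A, q.getLast? = some a)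
    (ha : p.getLast? = some a) (hb : q.head? = some b) (hab : a = b ∨ D a b)
    (hpq : ∀ z ∈ p, z ∈ q → z = a ∧ z = b) :
    ∃ r, IsDipathBetween D X A r ∧ ∀ z ∈ r, z ∈ p ∨ z ∈ q := by
  obtain ⟨r, hr, hhead, hlast, hsub⟩ := hp.exists_join hq ha hb hab hpq
  obtain ⟨r', hr'r, hr'⟩ := hr.exists_isDipathBetween_infix (hhead ▸ hX) (hlast ▸ hA)
  exact ⟨r', hr', fun z hz => hsub z (hr'r.subset hz)⟩

end DipathsBetween

section Separation

def deleteArc (D : V → V → Prop) (x y : V) : V → V → Prop := fun u w => D u w ∧ ¬(u = x ∧ w = y)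

/-- Separation is tested on walks (lists with repetitions allowed), which is equivalent to testing
it on dipaths and lets walks be spliced without shortcutting the cycles this creates. -/
def Separates (D : V → V → Prop) (K X A : Set V) : Prop :=
  ∀ p : List V, p.IsChain D → (∃ x ∈ X, p.head? = some x) → (∃ a ∈ A, p.getLast? = some a) →
    ∃ z ∈ p, z ∈ K

variable {x y : V} {S T T' Z : Set V}

theorem Separates.insert_source (hS : Separates (deleteArc D x y) S X A) :
    Separates D (insert x S) X A := by
  intro p hp hX hA
  by_cases hx : x ∈ p
  · exact ⟨x, hx, Set.mem_insert x S⟩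
  · obtain ⟨z, hz, hzS⟩ :=
      hS p (hp.imp_of_mem_imp fun u _ hu _ huw => ⟨huw, fun h => hx (h.1 ▸ hu)⟩) hX hA
    exact ⟨z, hz, Set.mem_insert_of_mem x hzS⟩

theorem Separates.insert_target (hS : Separates (deleteArc D x y) S X A) :
    Separates D (insert y S) X A := by
  intro p hp hX hA
  by_cases hy : y ∈ p
  · exact ⟨y, hy, Set.mem_insert y S⟩
  · obtain ⟨z, hz, hzS⟩ :=
      hS p (hp.imp_of_mem_imp fun _ w _ hw huw => ⟨huw, fun h => hy (h.2 ▸ hw)⟩) hX hA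
    exact ⟨z, hz, Set.mem_insert_of_mem y hzS⟩

theorem Separates.of_deleteArc_left (hT : Separates D T X A) (hxT : x ∈ T)
    (hZ : Separates (deleteArc D x y) Z X T) : Separates D Z X A := by
  intro p hp hX hA
  obtain ⟨l₁, t, l₂, rfl, htT, hl₁⟩ := exists_split_at_first_mem (hT p hp hX hA)
  have hpre : l₁ ++ [t] <+: l₁ ++ t :: l₂ := ⟨l₂, by simp⟩
  have hchain : (l₁ ++ [t]).IsChain (deleteArc D x y) :=
    (hp.prefix hpre).imp_of_mem_dropLast_imp fun u _ hu _ huw =>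
      ⟨huw, fun h => hl₁ u (by simpa using hu) (h.1 ▸ hxT)⟩
  obtain ⟨z, hz, hzZ⟩ := hZ _ hchain (by simpa using hX) ⟨t, htT, getLast?_concat⟩
  exact ⟨z, hpre.subset hz, hzZ⟩

theorem Separates.of_deleteArc_right (hT : Separates D T X A) (hyT : y ∈ T)
    (hZ : Separates (deleteArc D x y) Z T A) : Separates D Z X A := by
  intro p hp hX hA
  obtain ⟨l₁, t, l₂, rfl, htT, hl₂⟩ := exists_split_at_last_mem (hT p hp hX hA)
  have hsuf : t :: l₂ <:+ l₁ ++ t :: l₂ := suffix_append l₁ _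
  have hchain : (t :: l₂).IsChain (deleteArc D x y) :=
    (hp.suffix hsuf).imp_of_mem_tail_imp fun _ w _ hw huw =>
      ⟨huw, fun h => hl₂ w hw (h.2 ▸ hyT)⟩
  obtain ⟨z, hz, hzZ⟩ := hZ _ hchain ⟨t, htT, rfl⟩
    (by rwa [getLast?_append_of_ne_nil _ (cons_ne_nil _ _)] at hA)
  exact ⟨z, hsuf.subset hz, hzZ⟩

theorem IsDipathBetween.meet_of_separates (hS : Separates D S X A) (hST : S ⊆ T) (hST' : S ⊆ T')
    (hp : IsDipathBetween D X T p) (hq : IsDipathBetween D T' A q) {z : V} (hzp : z ∈ p)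
    (hzq : z ∈ q) : z ∈ S ∧ p.getLast? = some z ∧ q.head? = some z := by
  have hzS : z ∈ S := by
    by_contra hzS
    obtain ⟨l₁, l₂, rfl⟩ := append_of_mem hzp
    obtain ⟨m₁, m₂, rfl⟩ := append_of_mem hzq
    have hchain : (l₁ ++ [z] ++ m₂).IsChain D :=
      (hp.isDipath.isChain.prefix ⟨l₂, by simp⟩).append_overlap
        (hq.isDipath.isChain.suffix ⟨m₁, by simp⟩) (cons_ne_nil _ _)
    obtain ⟨u, hu, huS⟩ :=
      hS _ hchain (by simpa using hp.head_mem) (by simpa using hq.getLast_mem)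
    simp only [mem_append, mem_singleton] at hu
    rcases hu with (hu | rfl) | hu
    · exact hp.dropLast_notMem u (by simp [hu]) (hST huS)
    · exact hzS huS
    · exact hq.tail_notMem u (by cases m₁ <;> simp [hu]) (hST' huS)
  exact ⟨hzS, hp.getLast?_eq_of_mem hzp (hST hzS), hq.head?_eq_of_mem hzq (hST' hzS)⟩

end Separation

section DisjointDipaths

def HasDisjointDipaths (D : V → V → Prop) (X A : Set V) (k : ℕ) : Prop :=
  ∃ P : Fin k → List V, (∀ i, IsDipathBetween D X A (P i)) ∧
    Pairwise fun i j => (P i).Disjoint (P j)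

theorem HasDisjointDipaths.mono_s16 {k : ℕ} (h : ∀ u w, D' u w → D u w)
    (hP : HasDisjointDipaths D' X A k) : HasDisjointDipaths D X A k :=
  let ⟨P, hP, hdisj⟩ := hP
  ⟨P, fun i => (hP i).mono_s16 h, hdisj⟩

theorem injective_of_pairwise_disjoint {ι : Type*} {P : ι → List V} {f : ι → V}
    (hP : Pairwise fun i j => (P i).Disjoint (P j)) (hf : ∀ i, f i ∈ P i) : f.Injective :=
  fun i j h => by_contra fun hij => hP hij (hf i) (h ▸ hf j)

theorem exists_apply_eq_of_injective {k : ℕ} {T : Finset V} {f : Fin k → V} (hf : f.Injective)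
    (hfT : ∀ i, f i ∈ T) (hT : T.card ≤ k) {t : V} (ht : t ∈ T) : ∃ i, f i = t := by
  obtain ⟨i, -, rfl⟩ := Finset.surj_on_of_inj_on_of_card_le (s := Finset.univ) (fun i _ => f i)
    (fun i _ => hfT i) (fun i j _ _ h => hf h) (by simpa using hT) t ht
  exact ⟨i, rfl⟩

theorem exists_swap_matching [DecidableEq V] {k : ℕ} {x y : V} {S : Finset V} {ε τ : Fin k → V}
    (hx : x ∉ S) (hy : y ∉ S) (hε : ε.Injective) (hεS : ∀ i, ε i ∈ insert x S)
    (hτ : τ.Injective) (hτS : ∀ j, τ j ∈ insert y S) (hk : (insert y S).card ≤ k) :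
    ∃ σ : Fin k → Fin k, σ.Injective ∧ ∀ i, τ (σ i) = Equiv.swap x y (ε i) := by
  have hswap : ∀ i, Equiv.swap x y (ε i) ∈ insert y S := by
    intro i
    rcases Finset.mem_insert.mp (hεS i) with h | h
    · simp [h]
    · rw [Equiv.swap_apply_of_ne_of_ne (ne_of_mem_of_not_mem h hx) (ne_of_mem_of_not_mem h hy)]
      exact Finset.mem_insert_of_mem h
  choose σ hσ using fun i => exists_apply_eq_of_injective hτ hτS hk (hswap i)
  exact ⟨σ, fun i j h => hε ((Equiv.swap x y).injective ((hσ i).symm.trans (h ▸ hσ j))), hσ⟩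

theorem HasDisjointDipaths.of_deleteArc [DecidableEq V] {x y : V} {S : Finset V} {k : ℕ}
    (hxy : D x y) (hS : Separates (deleteArc D x y) S X A) (hx : x ∉ S) (hy : y ∉ S)
    (hky : (insert y S).card ≤ k)
    (hP : HasDisjointDipaths (deleteArc D x y) X ↑(insert x S) k)
    (hQ : HasDisjointDipaths (deleteArc D x y) ↑(insert y S) A k) :
    HasDisjointDipaths D X A k := by
  obtain ⟨P, hP, hPdisj⟩ := hP
  obtain ⟨Q, hQ, hQdisj⟩ := hQ
  choose ε hεS hε using fun i => (hP i).getLast_mem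
  choose τ hτS hτ using fun j => (hQ j).head_mem
  have hεinj := injective_of_pairwise_disjoint hPdisj fun i => mem_of_mem_getLast? (hε i)
  obtain ⟨σ, hσinj, hσ⟩ := exists_swap_matching hx hy hεinj hεS
    (injective_of_pairwise_disjoint hQdisj fun j => mem_of_mem_head? (hτ j)) hτS hky
  have hmeet : ∀ i j z, z ∈ P i → z ∈ Q j → z ∈ S ∧ z = ε i ∧ z = τ j := by
    intro i j z hzP hzQ
    obtain ⟨hzS, hzp, hzq⟩ := (hP i).meet_of_separates hS (by simp) (by simp) (hQ j) hzP hzQ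
    exact ⟨hzS, Option.some_inj.mp (hzp.symm.trans (hε i)),
      Option.some_inj.mp (hzq.symm.trans (hτ j))⟩
  have hswap : ∀ z ∈ S, Equiv.swap x y z = z := fun z hz =>
    Equiv.swap_apply_of_ne_of_ne (ne_of_mem_of_not_mem hz hx) (ne_of_mem_of_not_mem hz hy)
  have hcross : ∀ i j z, z ∈ P i → z ∈ Q (σ j) → i = j := by
    intro i j z hzP hzQ
    obtain ⟨hzS, rfl, hzτ⟩ := hmeet i (σ j) z hzP hzQ
    refine hεinj ?_
    rw [← Equiv.swap_apply_self x y (ε j), ← hσ j, ← hzτ, hswap _ hzS]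
  have hjoin : ∀ i, ε i = τ (σ i) ∨ D (ε i) (τ (σ i)) := by
    intro i
    rw [hσ i]
    rcases Finset.mem_insert.mp (hεS i) with h | h
    · simpa [h] using Or.inr hxy
    · exact Or.inl (hswap _ h).symm
  have hglue : ∀ i, ∃ r, IsDipathBetween D X A r ∧ ∀ z ∈ r, z ∈ P i ∨ z ∈ Q (σ i) := fun i =>
    ((hP i).isDipath.mono_s16 fun _ _ h => h.1).exists_isDipathBetween_of_join
      ((hQ (σ i)).isDipath.mono_s16 fun _ _ h => h.1) (hP i).head_mem (hQ (σ i)).getLast_mem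
      (hε i) (hτ (σ i)) (hjoin i) fun z hzP hzQ => (hmeet i (σ i) z hzP hzQ).2
  choose r hr hrPQ using hglue
  refine ⟨r, hr, fun i j hij z hzi hzj => ?_⟩
  rcases hrPQ i z hzi with h₁ | h₁ <;> rcases hrPQ j z hzj with h₂ | h₂
  · exact hPdisj hij h₁ h₂
  · exact hij (hcross i j z h₁ h₂)
  · exact hij (hcross j i z h₂ h₁).symm
  · exact hQdisj (hσinj.ne hij) h₁ h₂

theorem ncard_deleteArc_lt [Finite V] {x y : V} (hxy : D x y) :
    {e : V × V | deleteArc D x y e.1 e.2}.ncard < {e : V × V | D e.1 e.2}.ncard :=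
  Set.ncard_lt_ncard ⟨fun _ he => he.1, fun h => (h (show (x, y) ∈ _ from hxy)).2 ⟨rfl, rfl⟩⟩

theorem hasDisjointDipaths_of_forall_not_rel [Fintype V] {k : ℕ} (hD : ∀ u w, ¬ D u w)
    (h : ∀ K : Finset V, Separates D K X A → k ≤ K.card) : HasDisjointDipaths D X A k := by
  classical
  set K := Finset.univ.filter fun z => z ∈ X ∧ z ∈ A
  have hK : Separates D K X A := by
    rintro (_ | ⟨z, _ | ⟨w, p⟩⟩) hp ⟨x, hxX, hx⟩ ⟨a, haA, ha⟩
    · simp at hx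
    · simp only [head?_cons, getLast?_singleton, Option.some_inj] at hx ha
      subst hx ha
      exact ⟨z, mem_singleton_self z, by simp [K, hxX, haA]⟩
    · exact absurd (isChain_cons_cons.mp hp).1 (hD z w)
  have hk := h K hK
  let f : Fin k → K := fun i => K.equivFin.symm (Fin.castLE hk i)
  have hf : ∀ i, (f i : V) ∈ X ∧ (f i : V) ∈ A := fun i => (Finset.mem_filter.mp (f i).2).2
  refine ⟨fun i => [f i], fun i => ⟨⟨cons_ne_nil _ _, nodup_singleton _, isChain_singleton _⟩,
    ⟨_, (hf i).1, rfl⟩, ⟨_, (hf i).2, rfl⟩, by simp, by simp⟩, fun i j hij z hzi hzj => hij ?_⟩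
  rw [mem_singleton] at hzi hzj
  exact Fin.castLE_injective hk (K.equivFin.symm.injective (Subtype.ext (hzi.symm.trans hzj)))

theorem hasDisjointDipaths_of_forall_separates [Fintype V] (D : V → V → Prop) (X A : Set V)
    (k : ℕ) (h : ∀ K : Finset V, Separates D K X A → k ≤ K.card) :
    HasDisjointDipaths D X A k := by
  classical
  induction hn : {e : V × V | D e.1 e.2}.ncard using Nat.strong_induction_on
    generalizing D X A with
  | _ n ih =>
  by_cases harc : ∃ x y, D x y
  swap
  · push Not at harc
    exact hasDisjointDipaths_of_forall_not_rel harc h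
  obtain ⟨x, y, hxy⟩ := harc
  have hlt := hn ▸ ncard_deleteArc_lt hxy
  by_cases h' : ∀ K : Finset V, Separates (deleteArc D x y) K X A → k ≤ K.card
  · exact (ih _ hlt _ X A h' rfl).mono_s16 fun _ _ h => h.1
  push Not at h'
  obtain ⟨S, hS, hSk⟩ := h'
  have hTx : Separates D ↑(insert x S) X A := by simpa using hS.insert_source
  have hTy : Separates D ↑(insert y S) X A := by simpa using hS.insert_target
  have hx : x ∉ S := fun hx => (h _ hTx).not_gt (by rwa [Finset.insert_eq_of_mem hx])
  have hy : y ∉ S := fun hy => (h _ hTy).not_gt (by rwa [Finset.insert_eq_of_mem hy])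
  exact .of_deleteArc hxy hS hx hy ((Finset.card_insert_le y S).trans hSk)
    (ih _ hlt _ X _ (fun Z hZ => h Z (hTx.of_deleteArc_left (by simp) hZ)) rfl)
    (ih _ hlt _ _ A (fun Z hZ => h Z (hTy.of_deleteArc_right (by simp) hZ)) rfl)

end DisjointDipaths

section Fan

variable {v : V}

def deleteArcsInto (D : V → V → Prop) (v : V) : V → V → Prop := fun u w => D u w ∧ w ≠ v

theorem not_exists_dipath_of_separates [DecidableEq V] {K : Finset V} (hA : v ∉ A)
    (hK : Separates (deleteArcsInto D v) K {w | D v w ∧ w ≠ v} A) :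
    ¬ ∃ P : List V, IsDipathList D P ∧ P.head? = some v ∧ (∀ x ∈ P, x ∉ K.erase v) ∧
      ∃ a ∈ A, P.getLast? = some a := by
  rintro ⟨P, ⟨-, hnd, hch⟩, hh, hPK, a, haA, ha⟩
  obtain ⟨q, rfl⟩ := head?_eq_some_iff.mp hh
  obtain ⟨hvq, -⟩ := nodup_cons.mp hnd
  obtain ⟨w, q, rfl⟩ : ∃ w q', q = w :: q' := by
    cases q with
    | nil => exact absurd (by simpa using ha : v = a) fun h => hA (h ▸ haA)
    | cons w q' => exact ⟨w, q', rfl⟩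
  obtain ⟨hvw, hch⟩ := isChain_cons_cons.mp hch
  obtain ⟨z, hz, hzK⟩ := hK (w :: q)
    (hch.imp_of_mem_imp fun _ b _ hb hD => ⟨hD, fun h => hvq (h ▸ hb)⟩)
    ⟨w, ⟨hvw, fun h => hvq (h ▸ mem_cons_self)⟩, rfl⟩ ⟨a, haA, by rwa [getLast?_cons_cons] at ha⟩
  exact hPK z (mem_cons_of_mem v hz) (Finset.mem_erase.mpr ⟨fun h => hvq (h ▸ hz), hzK⟩)

theorem IsDipathBetween.notMem_of_deleteArcsInto
    (hp : IsDipathBetween (deleteArcsInto D v) {w | D v w ∧ w ≠ v} A p) : v ∉ p := by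
  obtain ⟨w, hw, hhead⟩ := hp.head_mem
  obtain ⟨q, rfl⟩ := head?_eq_some_iff.mp hhead
  rw [mem_cons, not_or]
  exact ⟨fun h => hw.2 h.symm,
    fun hv => hp.isDipath.isChain.cons_induction (· ≠ v) q (fun _ _ h _ => h.2) hw.2 v hv rfl⟩

theorem exists_fan_of_hasDisjointDipaths {k : ℕ}
    (h : HasDisjointDipaths (deleteArcsInto D v) {w | D v w ∧ w ≠ v} A k) :
    ∃ P : Fin k → List V,
      (∀ i, IsDipathList D (P i) ∧ (P i).head? = some v ∧
        (∃ a ∈ A, (P i).getLast? = some a) ∧ (∀ x ∈ (P i).tail.dropLast, x ∉ A)) ∧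
      (∀ i j, i ≠ j → ∀ x ∈ P i, x ∈ P j → x = v) := by
  obtain ⟨Q, hQ, hdisj⟩ := h
  refine ⟨fun i => v :: Q i, fun i => ⟨⟨cons_ne_nil _ _,
    nodup_cons.mpr ⟨(hQ i).notMem_of_deleteArcsInto, (hQ i).isDipath.nodup⟩,
    ((hQ i).isDipath.isChain.imp fun _ _ h => h.1).cons ?_⟩, rfl, ?_, (hQ i).dropLast_notMem⟩,
    fun i j hij z hzi hzj => ?_⟩
  · obtain ⟨w, hw, hhead⟩ := (hQ i).head_mem
    rw [hhead]
    rintro _ ⟨⟩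
    exact hw.1
  · rw [getLast?_cons_of_ne_nil (hQ i).isDipath.ne_nil]
    exact (hQ i).getLast_mem
  · rcases mem_cons.mp hzi with rfl | hzi
    · rfl
    rcases mem_cons.mp hzj with rfl | hzj
    · rfl
    exact absurd hzj (hdisj hij hzi)

end Fan

end Paper

namespace Paper

theorem stmt_16_general {V : Type*} [Fintype V] (D : V → V → Prop)
    (v : V) (A : Set V) (hA : v ∉ A) (k : ℕ) :
    (∃ P : Fin k → List V,
      (∀ i, IsDipathList D (P i) ∧ (P i).head? = some v ∧
        (∃ a ∈ A, (P i).getLast? = some a) ∧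
        (∀ x ∈ (P i).tail.dropLast, x ∉ A)) ∧
      (∀ i j, i ≠ j → ∀ x ∈ P i, x ∈ P j → x = v)) ∨
    (∃ K : Finset V, v ∉ K ∧ K.card < k ∧
      ¬ ∃ P : List V, IsDipathList D P ∧ P.head? = some v ∧
        (∀ x ∈ P, x ∉ K) ∧ ∃ a ∈ A, P.getLast? = some a) := by
  classical
  refine or_iff_not_imp_right.mpr fun hK => exists_fan_of_hasDisjointDipaths
    (hasDisjointDipaths_of_forall_separates _ _ _ k fun K hKsep => ?_)
  by_contra hlt
  exact hK ⟨K.erase v, K.notMem_erase v, Finset.card_erase_le.trans_lt (not_le.mp hlt),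
    not_exists_dipath_of_separates hA hKsep⟩

/-- (Menger, set version.) For a vertex `v`, a set `A ⊆ V ∖ {v}` and
`k ∈ ℕ`: either there are `k` (distinct) `v`-`A`-dipaths pairwise intersecting only at
`v`, or there is a set `K ⊆ V ∖ {v}` with `|K| < k` such that `D − K` has no directed
path starting at `v` and ending in `A`. -/
theorem stmt_16 {V : Type*} [Fintype V] (D : V → V → Prop) (hloop : ∀ v, ¬ D v v)
    (v : V) (A : Set V) (hA : v ∉ A) (k : ℕ) :
    (∃ P : Fin k → List V,
      (∀ i, IsDipathList D (P i) ∧ (P i).head? = some v ∧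
        (∃ a ∈ A, (P i).getLast? = some a) ∧
        (∀ x ∈ (P i).tail.dropLast, x ∉ A)) ∧
      (∀ i j, i ≠ j → ∀ x ∈ P i, x ∈ P j → x = v)) ∨
    (∃ K : Finset V, v ∉ K ∧ K.card < k ∧
      ¬ ∃ P : List V, IsDipathList D P ∧ P.head? = some v ∧
        (∀ x ∈ P, x ∉ K) ∧ ∃ a ∈ A, P.getLast? = some a) :=
  stmt_16_general D v A hA k

end Paper
end
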